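/- arXiv:math/0005221 — 12 statements merged into one kernel-verified Lean document; each statement's English description precedes it below -/
import Mathlib

section
/- (Theorem 1, in flat coordinates of the first metric.) Let U ⊆ ℝⁿ be open, let g = (g^{ij}) be a constant symmetric invertible n×n real matrix, and let r = (r^i_j) : U → GL_n(ℝ) be smooth with g̃^{ij} := Σ_s r^i_s g^{sj} symmetric (g̃^{ij} = g̃^{ji}) and invertible at each point. Let b̃ = (b̃^{ij}_k) be smooth on U such that the pair (g̃, b̃) satisfies the Hamiltonian conditions (J1) and (J2). Then the compatibility conditions (C3): 2Σ_s b̃^{ki}_s g^{sj} = Σ_s(g^{js}∂_s g̃^{ik} + g^{ks}∂_s g̃^{ij} − g^{is}∂_s g̃^{kj}) for all i,j,k, and (C4): Σ_s(g^{js}∂_s b̃^{ik}_n − g^{is}∂_s b̃^{jk}_n) = 0 for all i,j,k,n, hold on U if and only if (1) the Nijenhuis tensor of r vanishes identically on U, and (2) Σ_{s,t} (g^{is}g^{jt}∂_s∂_t g̃^{kl} + g^{ks}g^{lt}∂_s∂_t g̃^{ij} − g^{is}g^{kt}∂_s∂_t g̃^{jl} − g^{js}g^{lt}∂_s∂_t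 g̃^{ik}) = 0 for all i,j,k,l. Moreover, in that case 2b̃^{ij}_k = Σ_s(g^{is}∂_s r^j_k − g^{js}∂_s r^i_k) + ∂_k g̃^{ij}. -/
open scoped BigOperators
open Matrix Filter Topology

/-- Partial derivative of a scalar function on `ℝⁿ` in the `k`-th coordinate direction. -/
noncomputable def pd {n : ℕ} (k : Fin n) (f : (Fin n → ℝ) → ℝ) : (Fin n → ℝ) → ℝ :=
  fun x => fderiv ℝ f x (Pi.single k 1)

/-- The first Hamiltonian condition (J1) for a pair `(g, b)` on `U`. -/
def J1cond {n : ℕ} (U : Set (Fin n → ℝ)) (g : Fin n → Fin n → (Fin n → ℝ) → ℝ)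
    (b : Fin n → Fin n → Fin n → (Fin n → ℝ) → ℝ) : Prop :=
  ∀ x ∈ U, ∀ i j k : Fin n,
    2 * ∑ s, b k i s x * g s j x =
      ∑ s, (g j s x * pd s (g i k) x + g k s x * pd s (g i j) x - g i s x * pd s (g k j) x)

/-- The second Hamiltonian condition (J2) for a pair `(g, b)` on `U`. -/
def J2cond {n : ℕ} (U : Set (Fin n → ℝ)) (g : Fin n → Fin n → (Fin n → ℝ) → ℝ)
    (b : Fin n → Fin n → Fin n → (Fin n → ℝ) → ℝ) : Prop :=
  ∀ x ∈ U, ∀ i j k m : Fin n,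
    ∑ s, (g j s x * pd s (b i k m) x - g i s x * pd s (b j k m) x
      + (b i j s x - b j i s x) * b s k m x
      + b i k s x * b j s m x - b j k s x * b i s m x) = 0

private lemma pd_congr {n : ℕ} {k : Fin n} {f f₁ : (Fin n → ℝ) → ℝ} {x : Fin n → ℝ}
    (h : f =ᶠ[𝓝 x] f₁) : pd k f x = pd k f₁ x := by
  unfold pd; rw [h.fderiv_eq]

private lemma pd_congr_on {n : ℕ} {U : Set (Fin n → ℝ)} (hU : IsOpen U) {k : Fin n}
    {f f₁ : (Fin n → ℝ) → ℝ} {x : Fin n → ℝ} (hx : x ∈ U)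
    (h : ∀ y ∈ U, f y = f₁ y) : pd k f x = pd k f₁ x :=
  pd_congr (Filter.eventually_of_mem (hU.mem_nhds hx) h)

private lemma pd_sum {n : ℕ} (k : Fin n) {ι : Type*} (u : Finset ι)
    (A : ι → (Fin n → ℝ) → ℝ) {x : Fin n → ℝ} (h : ∀ i ∈ u, DifferentiableAt ℝ (A i) x) :
    pd k (fun y => ∑ i ∈ u, A i y) x = ∑ i ∈ u, pd k (A i) x := by
  unfold pd; rw [fderiv_fun_sum h]; simp

private lemma pd_mul_const {n : ℕ} (k : Fin n) {f : (Fin n → ℝ) → ℝ} {x : Fin n → ℝ}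
    (hf : DifferentiableAt ℝ f x) (c : ℝ) :
    pd k (fun y => f y * c) x = pd k f x * c := by
  unfold pd; rw [fderiv_mul_const hf]; simp [mul_comm]

private lemma pd_const_mul {n : ℕ} (k : Fin n) {f : (Fin n → ℝ) → ℝ} {x : Fin n → ℝ}
    (hf : DifferentiableAt ℝ f x) (c : ℝ) :
    pd k (fun y => c * f y) x = c * pd k f x := by
  unfold pd; rw [fderiv_const_mul hf]; simp

private lemma pd_sub {n : ℕ} (k : Fin n) {f g : (Fin n → ℝ) → ℝ} {x : Fin n → ℝ}
    (hf : DifferentiableAt ℝ f x) (hg : DifferentiableAt ℝ g x) :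
    pd k (fun y => f y - g y) x = pd k f x - pd k g x := by
  unfold pd; rw [fderiv_fun_sub hf hg]; simp

private lemma pd_add {n : ℕ} (k : Fin n) {f g : (Fin n → ℝ) → ℝ} {x : Fin n → ℝ}
    (hf : DifferentiableAt ℝ f x) (hg : DifferentiableAt ℝ g x) :
    pd k (fun y => f y + g y) x = pd k f x + pd k g x := by
  unfold pd; rw [fderiv_fun_add hf hg]; simp

private lemma diffAt_of_cd {n : ℕ} {U : Set (Fin n → ℝ)} (hU : IsOpen U)
    {f : (Fin n → ℝ) → ℝ} (hf : ContDiffOn ℝ (⊤ : ℕ∞) f U) {x : Fin n → ℝ} (hx : x ∈ U) :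
    DifferentiableAt ℝ f x :=
  ((hf.contDiffAt (hU.mem_nhds hx)).differentiableAt (by simp))

private lemma diffAt_pd {n : ℕ} {U : Set (Fin n → ℝ)} (hU : IsOpen U) (t : Fin n)
    {f : (Fin n → ℝ) → ℝ} (hf : ContDiffOn ℝ (⊤ : ℕ∞) f U) {x : Fin n → ℝ} (hx : x ∈ U) :
    DifferentiableAt ℝ (pd t f) x := by
  have h1 : ContDiffAt ℝ (⊤ : ℕ∞) f x := hf.contDiffAt (hU.mem_nhds hx)
  have h2 : ContDiffAt ℝ 1 (fderiv ℝ f) x := h1.fderiv_right (by exact WithTop.coe_le_coe.mpr le_top)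
  have h3 : DifferentiableAt ℝ (fderiv ℝ f) x := h2.differentiableAt one_ne_zero
  exact h3.clm_apply (differentiableAt_const _)

private lemma pd_comm {n : ℕ} {U : Set (Fin n → ℝ)} (hU : IsOpen U)
    {f : (Fin n → ℝ) → ℝ} (hf : ContDiffOn ℝ (⊤ : ℕ∞) f U) {x : Fin n → ℝ} (hx : x ∈ U)
    (s t : Fin n) : pd s (pd t f) x = pd t (pd s f) x := by
  have hev : ∀ᶠ y in 𝓝 x, HasFDerivAt f (fderiv ℝ f y) y := by
    filter_upwards [hU.mem_nhds hx] with y hy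
    exact (diffAt_of_cd hU hf hy).hasFDerivAt
  have h1 : ContDiffAt ℝ (⊤ : ℕ∞) f x := hf.contDiffAt (hU.mem_nhds hx)
  have h2 : ContDiffAt ℝ 1 (fderiv ℝ f) x := h1.fderiv_right (by exact WithTop.coe_le_coe.mpr le_top)
  have h3 : DifferentiableAt ℝ (fderiv ℝ f) x := h2.differentiableAt one_ne_zero
  have hsymm := second_derivative_symmetric_of_eventually hev h3.hasFDerivAt
  have key : ∀ a b : Fin n, pd a (pd b f) x
      = fderiv ℝ (fderiv ℝ f) x (Pi.single a 1) (Pi.single b 1) := by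
    intro a b
    show fderiv ℝ (fun y => fderiv ℝ f y (Pi.single b 1)) x (Pi.single a 1) = _
    rw [fderiv_clm_apply h3 (differentiableAt_const _)]
    simp
  rw [key, key, hsymm]
private lemma vec_cancel {n : ℕ} (M : Matrix (Fin n) (Fin n) ℝ) (hM : M.det ≠ 0)
    {v w : Fin n → ℝ} (h : ∀ j, ∑ s, v s * M s j = ∑ s, w s * M s j) : v = w := by
  have hu : IsUnit M.det := isUnit_iff_ne_zero.mpr hM
  have h1 : Matrix.vecMul v M = Matrix.vecMul w M := by
    funext j
    simpa [Matrix.vecMul, dotProduct] using h j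
  have := congrArg (fun z => Matrix.vecMul z M⁻¹) h1
  simpa [Matrix.vecMul_vecMul, Matrix.mul_nonsing_inv M hu] using this

private lemma conj_cancel {n : ℕ} (g : Matrix (Fin n) (Fin n) ℝ) (hg : g.det ≠ 0)
    (M : Fin n → Fin n → ℝ)
    (h : ∀ i k, ∑ a, ∑ b, g i a * g k b * M a b = 0) : ∀ a b, M a b = 0 := by
  have hu : IsUnit g.det := isUnit_iff_ne_zero.mpr hg
  have h1 : g * (Matrix.of M) * gᵀ = 0 := by
    ext i k
    rw [Matrix.mul_apply]
    calc ∑ b, (g * Matrix.of M) i b * gᵀ b k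
        = ∑ b, ∑ a, g i a * g k b * M a b := by
          refine Finset.sum_congr rfl fun b _ => ?_
          rw [Matrix.mul_apply, Finset.sum_mul]
          refine Finset.sum_congr rfl fun a _ => ?_
          simp [Matrix.transpose_apply, Matrix.of_apply]; ring
      _ = 0 := by rw [Finset.sum_comm]; exact h i k
  have h2 : Matrix.of M = g⁻¹ * (g * (Matrix.of M) * gᵀ) * (gᵀ)⁻¹ := by
    have hut : IsUnit gᵀ.det := by rwa [Matrix.det_transpose]
    simp only [Matrix.mul_assoc]
    rw [Matrix.mul_nonsing_inv _ hut, Matrix.mul_one, ← Matrix.mul_assoc,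
      Matrix.nonsing_inv_mul _ hu, Matrix.one_mul]
  intro a b
  have : Matrix.of M a b = 0 := by rw [h2, h1]; simp
  simpa using this
private lemma core_identity {n : ℕ} (g ρ : Fin n → Fin n → ℝ) (D : Fin n → Fin n → Fin n → ℝ)
    (hg : ∀ i j, g i j = g j i)
    (hρ : ∀ i j, ∑ t, ρ i t * g t j = ∑ t, ρ j t * g t i)
    (hD : ∀ s i j, ∑ t, D s i t * g t j = ∑ t, D s j t * g t i)
    (i k j : Fin n) :
    (∑ s, ((∑ t, ρ k t * g t s) * (∑ t, D s i t * g t j)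
         - (∑ t, ρ i t * g t s) * (∑ t, D s k t * g t j)
         - g k s * (∑ m, D s i m * (∑ t, ρ m t * g t j))
         + g i s * (∑ m, D s k m * (∑ t, ρ m t * g t j))))
    + ∑ a, ∑ b, g i a * g k b *
        (∑ s, (ρ s a * D s j b - ρ s b * D s j a - ρ j s * D a s b + ρ j s * D b s a)) = 0 := by
  -- factor rewrites
  have fact1 : ∀ s m, ∑ a, g m a * ρ s a = ∑ t, ρ m t * g t s := by
    intro s m
    calc ∑ a, g m a * ρ s a = ∑ a, ρ s a * g a m := by
          refine Finset.sum_congr rfl fun a _ => ?_; rw [hg m a]; ring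
      _ = ∑ t, ρ m t * g t s := hρ s m
  have fact2 : ∀ s γ m, ∑ b, g m b * D s γ b = ∑ t, D s m t * g t γ := by
    intro s γ m
    calc ∑ b, g m b * D s γ b = ∑ b, D s γ b * g b m := by
          refine Finset.sum_congr rfl fun b _ => ?_; rw [hg m b]; ring
      _ = ∑ t, D s m t * g t γ := hD s γ m
  have fact3 : ∀ m b, ∑ s, ρ m s * g s b = ∑ t, ρ b t * g t m := by
    intro m b
    calc ∑ s, ρ m s * g s b = ∑ t, ρ m t * g t b := rfl
      _ = ∑ t, ρ b t * g t m := hρ m b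
  -- I1
  have I1 : ∑ a, ∑ b, ∑ s, g i a * g k b * (ρ s a * D s j b)
      = ∑ s, (∑ t, ρ i t * g t s) * (∑ t, D s k t * g t j) := by
    have step : ∀ s : Fin n, ∑ a, ∑ b, g i a * g k b * (ρ s a * D s j b)
        = (∑ t, ρ i t * g t s) * (∑ t, D s k t * g t j) := by
      intro s
      rw [← fact1 s i, ← fact2 s j k, Finset.sum_mul_sum]
      exact Finset.sum_congr rfl fun a _ => Finset.sum_congr rfl fun b _ => by ring
    calc ∑ a, ∑ b, ∑ s, g i a * g k b * (ρ s a * D s j b)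
        = ∑ a, ∑ s, ∑ b, g i a * g k b * (ρ s a * D s j b) := by
          exact Finset.sum_congr rfl fun a _ => Finset.sum_comm
      _ = ∑ s, ∑ a, ∑ b, g i a * g k b * (ρ s a * D s j b) := Finset.sum_comm
      _ = ∑ s, (∑ t, ρ i t * g t s) * (∑ t, D s k t * g t j) :=
          Finset.sum_congr rfl fun s _ => step s
  -- I2
  have I2 : ∑ a, ∑ b, ∑ s, g i a * g k b * (ρ s b * D s j a)
      = ∑ s, (∑ t, ρ k t * g t s) * (∑ t, D s i t * g t j) := by
    have step : ∀ s : Fin n, ∑ a, ∑ b, g i a * g k b * (ρ s b * D s j a)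
        = (∑ t, ρ k t * g t s) * (∑ t, D s i t * g t j) := by
      intro s
      rw [← fact1 s k, ← fact2 s j i, Finset.sum_mul_sum]
      rw [Finset.sum_comm]
      exact Finset.sum_congr rfl fun a _ => Finset.sum_congr rfl fun b _ => by ring
    calc ∑ a, ∑ b, ∑ s, g i a * g k b * (ρ s b * D s j a)
        = ∑ a, ∑ s, ∑ b, g i a * g k b * (ρ s b * D s j a) := by
          exact Finset.sum_congr rfl fun a _ => Finset.sum_comm
      _ = ∑ s, ∑ a, ∑ b, g i a * g k b * (ρ s b * D s j a) := Finset.sum_comm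
      _ = ∑ s, (∑ t, ρ k t * g t s) * (∑ t, D s i t * g t j) :=
          Finset.sum_congr rfl fun s _ => step s
  -- I3
  have I3 : ∑ a, ∑ b, ∑ s, g i a * g k b * (ρ j s * D a s b)
      = ∑ s, g i s * (∑ m, D s k m * (∑ t, ρ m t * g t j)) := by
    refine Finset.sum_congr rfl fun a _ => ?_
    -- fix a; show ∑ b ∑ s g i a * g k b * (ρ j s * D a s b) = g i a * ∑ m, D a k m * h m j
    calc ∑ b, ∑ s, g i a * g k b * (ρ j s * D a s b)
        = ∑ s, ρ j s * (∑ b, g k b * D a s b) * g i a := by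
          rw [Finset.sum_comm]
          refine Finset.sum_congr rfl fun s _ => ?_
          rw [Finset.mul_sum, Finset.sum_mul]
          exact Finset.sum_congr rfl fun b _ => by ring
      _ = ∑ s, ρ j s * (∑ m, D a k m * g m s) * g i a := by
          refine Finset.sum_congr rfl fun s _ => ?_
          rw [fact2 a s k]
      _ = ∑ s, ∑ m, ρ j s * D a k m * g m s * g i a := by
          refine Finset.sum_congr rfl fun s _ => ?_
          rw [Finset.mul_sum, Finset.sum_mul]
          exact Finset.sum_congr rfl fun m _ => by ring
      _ = ∑ m, ∑ s, ρ j s * D a k m * g m s * g i a := Finset.sum_comm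
      _ = ∑ m, D a k m * (∑ s, ρ j s * g s m) * g i a := by
          refine Finset.sum_congr rfl fun m _ => ?_
          rw [Finset.mul_sum, Finset.sum_mul]
          refine Finset.sum_congr rfl fun s _ => by rw [hg s m]; ring
      _ = g i a * (∑ m, D a k m * (∑ t, ρ m t * g t j)) := by
          rw [Finset.mul_sum]
          refine Finset.sum_congr rfl fun m _ => ?_
          rw [fact3 j m]; ring
  -- I4
  have I4 : ∑ a, ∑ b, ∑ s, g i a * g k b * (ρ j s * D b s a)
      = ∑ s, g k s * (∑ m, D s i m * (∑ t, ρ m t * g t j)) := by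
    rw [Finset.sum_comm]
    refine Finset.sum_congr rfl fun b _ => ?_
    calc ∑ a, ∑ s, g i a * g k b * (ρ j s * D b s a)
        = ∑ s, ρ j s * (∑ a, g i a * D b s a) * g k b := by
          rw [Finset.sum_comm]
          refine Finset.sum_congr rfl fun s _ => ?_
          rw [Finset.mul_sum, Finset.sum_mul]
          exact Finset.sum_congr rfl fun a _ => by ring
      _ = ∑ s, ρ j s * (∑ m, D b i m * g m s) * g k b := by
          refine Finset.sum_congr rfl fun s _ => ?_
          rw [fact2 b s i]
      _ = ∑ s, ∑ m, ρ j s * D b i m * g m s * g k b := by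
          refine Finset.sum_congr rfl fun s _ => ?_
          rw [Finset.mul_sum, Finset.sum_mul]
          exact Finset.sum_congr rfl fun m _ => by ring
      _ = ∑ m, ∑ s, ρ j s * D b i m * g m s * g k b := Finset.sum_comm
      _ = ∑ m, D b i m * (∑ s, ρ j s * g s m) * g k b := by
          refine Finset.sum_congr rfl fun m _ => ?_
          rw [Finset.mul_sum, Finset.sum_mul]
          refine Finset.sum_congr rfl fun s _ => by rw [hg s m]; ring
      _ = g k b * (∑ m, D b i m * (∑ t, ρ m t * g t j)) := by
          rw [Finset.mul_sum]
          refine Finset.sum_congr rfl fun m _ => ?_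
          rw [fact3 j m]; ring
  -- expand the N̂ part into four triple sums
  have expand : ∑ a, ∑ b, g i a * g k b *
        (∑ s, (ρ s a * D s j b - ρ s b * D s j a - ρ j s * D a s b + ρ j s * D b s a))
      = (∑ a, ∑ b, ∑ s, g i a * g k b * (ρ s a * D s j b))
        - (∑ a, ∑ b, ∑ s, g i a * g k b * (ρ s b * D s j a))
        - (∑ a, ∑ b, ∑ s, g i a * g k b * (ρ j s * D a s b))
        + (∑ a, ∑ b, ∑ s, g i a * g k b * (ρ j s * D b s a)) := by
    rw [← Finset.sum_sub_distrib, ← Finset.sum_sub_distrib, ← Finset.sum_add_distrib]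
    refine Finset.sum_congr rfl fun a _ => ?_
    rw [← Finset.sum_sub_distrib, ← Finset.sum_sub_distrib, ← Finset.sum_add_distrib]
    refine Finset.sum_congr rfl fun b _ => ?_
    rw [Finset.mul_sum, ← Finset.sum_sub_distrib, ← Finset.sum_sub_distrib,
      ← Finset.sum_add_distrib]
    exact Finset.sum_congr rfl fun s _ => by ring
  rw [expand, I1, I2, I3, I4]
  rw [← Finset.sum_sub_distrib, ← Finset.sum_sub_distrib, ← Finset.sum_add_distrib,
    ← Finset.sum_add_distrib]
  exact Finset.sum_eq_zero fun s _ => by ring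
section Ctx

variable {n : ℕ} {U : Set (Fin n → ℝ)}

private lemma g'_cd (hU : IsOpen U) {g : Matrix (Fin n) (Fin n) ℝ}
    {r g' : Fin n → Fin n → (Fin n → ℝ) → ℝ}
    (hr : ∀ i j, ContDiffOn ℝ (⊤ : ℕ∞) (r i j) U)
    (hg'def : ∀ i j, g' i j = fun x => ∑ s, r i s x * g s j)
    (i j : Fin n) : ContDiffOn ℝ (⊤ : ℕ∞) (g' i j) U := by
  rw [hg'def]
  exact ContDiffOn.sum fun s _ => (hr i s).mul contDiffOn_const

private lemma pd_g'_eq (hU : IsOpen U) {g : Matrix (Fin n) (Fin n) ℝ}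
    {r g' : Fin n → Fin n → (Fin n → ℝ) → ℝ}
    (hr : ∀ i j, ContDiffOn ℝ (⊤ : ℕ∞) (r i j) U)
    (hg'def : ∀ i j, g' i j = fun x => ∑ s, r i s x * g s j)
    {x : Fin n → ℝ} (hx : x ∈ U) (s i j : Fin n) :
    pd s (g' i j) x = ∑ t, pd s (r i t) x * g t j := by
  rw [hg'def]
  rw [pd_sum s Finset.univ (fun t y => r i t y * g t j)
    (fun t _ => (diffAt_of_cd hU (hr i t) hx).mul_const _)]
  exact Finset.sum_congr rfl fun t _ => pd_mul_const s (diffAt_of_cd hU (hr i t) hx) _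

private lemma pd_g'_symm (hU : IsOpen U) {g' : Fin n → Fin n → (Fin n → ℝ) → ℝ}
    (hg'sym : ∀ x ∈ U, ∀ i j, g' i j x = g' j i x)
    {x : Fin n → ℝ} (hx : x ∈ U) (s i j : Fin n) :
    pd s (g' i j) x = pd s (g' j i) x :=
  pd_congr_on hU hx (fun y hy => hg'sym y hy i j)

/-- The contraction rewrite lemma `lemA`. -/
private lemma lemA (hU : IsOpen U) {g : Matrix (Fin n) (Fin n) ℝ}
    (hgs : ∀ i j : Fin n, g i j = g j i)
    {r g' : Fin n → Fin n → (Fin n → ℝ) → ℝ}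
    (hr : ∀ i j, ContDiffOn ℝ (⊤ : ℕ∞) (r i j) U)
    (hg'def : ∀ i j, g' i j = fun x => ∑ s, r i s x * g s j)
    {x : Fin n → ℝ} (hx : x ∈ U) (i k j : Fin n) :
    ∑ s, (g j s * pd s (g' i k) x + g k s * pd s (g' i j) x - g i s * pd s (g' k j) x)
      = ∑ t, (pd t (g' i k) x + ∑ s, g k s * pd s (r i t) x
          - ∑ s, g i s * pd s (r k t) x) * g t j := by
  have fP : ∀ s α β : Fin n, pd s (g' α β) x = ∑ t, pd s (r α t) x * g t β :=
    fun s α β => pd_g'_eq hU hr hg'def hx s α β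
  have t1 : ∑ s, g j s * pd s (g' i k) x = ∑ t, pd t (g' i k) x * g t j := by
    refine Finset.sum_congr rfl fun s _ => ?_
    rw [hgs j s]; ring
  have t2 : ∀ α β : Fin n, ∑ s, g α s * pd s (g' β j) x
      = ∑ t, (∑ s, g α s * pd s (r β t) x) * g t j := by
    intro α β
    calc ∑ s, g α s * pd s (g' β j) x
        = ∑ s, ∑ t, g α s * (pd s (r β t) x * g t j) := by
          refine Finset.sum_congr rfl fun s _ => ?_
          rw [fP s β j, Finset.mul_sum]
      _ = ∑ t, ∑ s, g α s * (pd s (r β t) x * g t j) := Finset.sum_comm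
      _ = ∑ t, (∑ s, g α s * pd s (r β t) x) * g t j := by
          refine Finset.sum_congr rfl fun t _ => ?_
          rw [Finset.sum_mul]
          exact Finset.sum_congr rfl fun s _ => by ring
  calc ∑ s, (g j s * pd s (g' i k) x + g k s * pd s (g' i j) x - g i s * pd s (g' k j) x)
      = (∑ s, g j s * pd s (g' i k) x) + (∑ s, g k s * pd s (g' i j) x)
        - ∑ s, g i s * pd s (g' k j) x := by
        rw [← Finset.sum_add_distrib, ← Finset.sum_sub_distrib]
    _ = (∑ t, pd t (g' i k) x * g t j) + (∑ t, (∑ s, g k s * pd s (r i t) x) * g t j)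
        - ∑ t, (∑ s, g i s * pd s (r k t) x) * g t j := by rw [t1, t2 k i, t2 i k]
    _ = ∑ t, (pd t (g' i k) x + ∑ s, g k s * pd s (r i t) x
          - ∑ s, g i s * pd s (r k t) x) * g t j := by
        rw [← Finset.sum_add_distrib, ← Finset.sum_sub_distrib]
        exact Finset.sum_congr rfl fun t _ => by ring

/-- The `lemB` identity: J1-RHS minus the candidate contraction equals `Δ`. -/
private lemma lemB (hU : IsOpen U) {g : Matrix (Fin n) (Fin n) ℝ}
    {r g' : Fin n → Fin n → (Fin n → ℝ) → ℝ}
    (hr : ∀ i j, ContDiffOn ℝ (⊤ : ℕ∞) (r i j) U)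
    (hg'def : ∀ i j, g' i j = fun x => ∑ s, r i s x * g s j)
    (hg'sym : ∀ x ∈ U, ∀ i j, g' i j x = g' j i x)
    {x : Fin n → ℝ} (hx : x ∈ U) (i k j : Fin n) :
    (∑ s, (g' j s x * pd s (g' i k) x + g' k s x * pd s (g' i j) x
        - g' i s x * pd s (g' k j) x))
      - ∑ t, (pd t (g' i k) x + ∑ s, g k s * pd s (r i t) x
          - ∑ s, g i s * pd s (r k t) x) * g' t j x
    = ∑ s, (g' k s x * pd s (g' i j) x - g' i s x * pd s (g' k j) x
        - g k s * (∑ m, pd s (r i m) x * g' m j x)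
        + g i s * (∑ m, pd s (r k m) x * g' m j x)) := by
  have fhs : ∀ α β : Fin n, g' α β x = g' β α x := fun α β => hg'sym x hx α β
  have e0 : ∑ s, g' j s x * pd s (g' i k) x = ∑ t, pd t (g' i k) x * g' t j x := by
    refine Finset.sum_congr rfl fun s _ => ?_
    rw [fhs j s]; ring
  have e1 : ∀ α β : Fin n, ∑ t, (∑ s, g α s * pd s (r β t) x) * g' t j x
      = ∑ s, g α s * (∑ m, pd s (r β m) x * g' m j x) := by
    intro α β
    calc ∑ t, (∑ s, g α s * pd s (r β t) x) * g' t j x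
        = ∑ t, ∑ s, g α s * (pd s (r β t) x * g' t j x) := by
          refine Finset.sum_congr rfl fun t _ => ?_
          rw [Finset.sum_mul]
          exact Finset.sum_congr rfl fun s _ => by ring
      _ = ∑ s, ∑ t, g α s * (pd s (r β t) x * g' t j x) := Finset.sum_comm
      _ = ∑ s, g α s * (∑ m, pd s (r β m) x * g' m j x) := by
          refine Finset.sum_congr rfl fun s _ => ?_
          rw [Finset.mul_sum]
  have split : ∑ t, (pd t (g' i k) x + ∑ s, g k s * pd s (r i t) x
          - ∑ s, g i s * pd s (r k t) x) * g' t j x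
      = (∑ t, pd t (g' i k) x * g' t j x)
        + (∑ s, g k s * (∑ m, pd s (r i m) x * g' m j x))
        - ∑ s, g i s * (∑ m, pd s (r k m) x * g' m j x) := by
    rw [← e1 k i, ← e1 i k, ← Finset.sum_add_distrib, ← Finset.sum_sub_distrib]
    exact Finset.sum_congr rfl fun t _ => by ring
  rw [split, ← e0]
  rw [← Finset.sum_add_distrib, ← Finset.sum_sub_distrib, ← Finset.sum_sub_distrib]
  exact Finset.sum_congr rfl fun s _ => by ring

/-- Core identity in context form. -/
private lemma core_ctx (hU : IsOpen U) {g : Matrix (Fin n) (Fin n) ℝ}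
    (hgs : ∀ i j : Fin n, g i j = g j i)
    {r g' : Fin n → Fin n → (Fin n → ℝ) → ℝ}
    (hr : ∀ i j, ContDiffOn ℝ (⊤ : ℕ∞) (r i j) U)
    (hg'def : ∀ i j, g' i j = fun x => ∑ s, r i s x * g s j)
    (hg'sym : ∀ x ∈ U, ∀ i j, g' i j x = g' j i x)
    {x : Fin n → ℝ} (hx : x ∈ U) (i k j : Fin n) :
    (∑ s, (g' k s x * pd s (g' i j) x - g' i s x * pd s (g' k j) x
        - g k s * (∑ m, pd s (r i m) x * g' m j x)
        + g i s * (∑ m, pd s (r k m) x * g' m j x)))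
    + ∑ a, ∑ b, g i a * g k b *
        (∑ s, (r s a x * pd s (r j b) x - r s b x * pd s (r j a) x
          - r j s x * pd a (r s b) x + r j s x * pd b (r s a) x)) = 0 := by
  have fh : ∀ α β : Fin n, g' α β x = ∑ t, r α t x * g t β := fun α β => by rw [hg'def]
  have fP : ∀ s α β : Fin n, pd s (g' α β) x = ∑ t, pd s (r α t) x * g t β :=
    fun s α β => pd_g'_eq hU hr hg'def hx s α β
  have hρ : ∀ α β : Fin n, ∑ t, r α t x * g t β = ∑ t, r β t x * g t α := by
    intro α β; rw [← fh, ← fh]; exact hg'sym x hx α β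
  have hD : ∀ s α β : Fin n, ∑ t, pd s (r α t) x * g t β = ∑ t, pd s (r β t) x * g t α := by
    intro s α β; rw [← fP, ← fP]; exact pd_g'_symm hU hg'sym hx s α β
  have H := core_identity (fun a b => g a b) (fun a b => r a b x)
    (fun s a b => pd s (r a b) x) hgs hρ hD i k j
  simp only [← fh, ← fP] at H
  exact H

end Ctx
section C3N

variable {n : ℕ} {U : Set (Fin n → ℝ)}

/-- From C3 at `x`, extract the explicit formula for `b'`. -/
private lemma c3_extract (hU : IsOpen U) {g : Matrix (Fin n) (Fin n) ℝ}
    (hgs : ∀ i j : Fin n, g i j = g j i) (hginv : g.det ≠ 0)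
    {r g' : Fin n → Fin n → (Fin n → ℝ) → ℝ}
    {b' : Fin n → Fin n → Fin n → (Fin n → ℝ) → ℝ}
    (hr : ∀ i j, ContDiffOn ℝ (⊤ : ℕ∞) (r i j) U)
    (hg'def : ∀ i j, g' i j = fun x => ∑ s, r i s x * g s j)
    {x : Fin n → ℝ} (hx : x ∈ U)
    (hC3 : ∀ i j k : Fin n, 2 * ∑ s, b' k i s x * g s j
        = ∑ s, (g j s * pd s (g' i k) x + g k s * pd s (g' i j) x
          - g i s * pd s (g' k j) x)) :
    ∀ i k t : Fin n, 2 * b' k i t x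
      = pd t (g' i k) x + ∑ s, g k s * pd s (r i t) x - ∑ s, g i s * pd s (r k t) x := by
  intro i k
  have key : (fun t => 2 * b' k i t x)
      = fun t => pd t (g' i k) x + ∑ s, g k s * pd s (r i t) x
          - ∑ s, g i s * pd s (r k t) x := by
    refine vec_cancel g hginv (fun j => ?_)
    calc ∑ s, 2 * b' k i s x * g s j = 2 * ∑ s, b' k i s x * g s j := by
          rw [Finset.mul_sum]
          exact Finset.sum_congr rfl fun s _ => by ring
      _ = ∑ s, (g j s * pd s (g' i k) x + g k s * pd s (g' i j) x
            - g i s * pd s (g' k j) x) := hC3 i j k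
      _ = ∑ t, (pd t (g' i k) x + ∑ s, g k s * pd s (r i t) x
            - ∑ s, g i s * pd s (r k t) x) * g t j := lemA hU hgs hr hg'def hx i k j
  exact fun t => congrFun key t

/-- The moreover-part: C3 at x gives the formula for `b'`. -/
private lemma bform (hU : IsOpen U) {g : Matrix (Fin n) (Fin n) ℝ}
    (hgs : ∀ i j : Fin n, g i j = g j i) (hginv : g.det ≠ 0)
    {r g' : Fin n → Fin n → (Fin n → ℝ) → ℝ}
    {b' : Fin n → Fin n → Fin n → (Fin n → ℝ) → ℝ}
    (hr : ∀ i j, ContDiffOn ℝ (⊤ : ℕ∞) (r i j) U)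
    (hg'def : ∀ i j, g' i j = fun x => ∑ s, r i s x * g s j)
    (hg'sym : ∀ x ∈ U, ∀ i j, g' i j x = g' j i x)
    {x : Fin n → ℝ} (hx : x ∈ U)
    (hC3 : ∀ i j k : Fin n, 2 * ∑ s, b' k i s x * g s j
        = ∑ s, (g j s * pd s (g' i k) x + g k s * pd s (g' i j) x
          - g i s * pd s (g' k j) x)) :
    ∀ i j k : Fin n, 2 * b' i j k x
      = ∑ s, (g i s * pd s (r j k) x - g j s * pd s (r i k) x) + pd k (g' i j) x := by
  intro i j k
  have h1 := c3_extract hU hgs hginv hr hg'def hx hC3 j i k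
  rw [h1, pd_g'_symm hU hg'sym hx k j i, Finset.sum_sub_distrib]
  ring

/-- Pointwise: given J1', C3 at `x` is equivalent to vanishing of the Nijenhuis tensor at `x`. -/
private lemma c3_iff_N (hU : IsOpen U) {g : Matrix (Fin n) (Fin n) ℝ}
    (hgs : ∀ i j : Fin n, g i j = g j i) (hginv : g.det ≠ 0)
    {r g' : Fin n → Fin n → (Fin n → ℝ) → ℝ}
    {b' : Fin n → Fin n → Fin n → (Fin n → ℝ) → ℝ}
    (hr : ∀ i j, ContDiffOn ℝ (⊤ : ℕ∞) (r i j) U)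
    (hg'def : ∀ i j, g' i j = fun x => ∑ s, r i s x * g s j)
    (hg'sym : ∀ x ∈ U, ∀ i j, g' i j x = g' j i x)
    (hg'inv : ∀ x ∈ U, (Matrix.of fun i j => g' i j x).det ≠ 0)
    (hJ1' : J1cond U g' b')
    {x : Fin n → ℝ} (hx : x ∈ U) :
    (∀ i j k : Fin n, 2 * ∑ s, b' k i s x * g s j
        = ∑ s, (g j s * pd s (g' i k) x + g k s * pd s (g' i j) x
          - g i s * pd s (g' k j) x))
    ↔ (∀ i j k : Fin n, ∑ s, (r s j x * pd s (r i k) x - r s k x * pd s (r i j) x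
          - r i s x * pd j (r s k) x + r i s x * pd k (r s j) x) = 0) := by
  have hJ1x := hJ1' x hx
  constructor
  · intro hC3 i j k
    have hb := c3_extract hU hgs hginv hr hg'def hx hC3
    -- Δ vanishes
    have hdel : ∀ i' k' j' : Fin n,
        ∑ s, (g' k' s x * pd s (g' i' j') x - g' i' s x * pd s (g' k' j') x
          - g k' s * (∑ m, pd s (r i' m) x * g' m j' x)
          + g i' s * (∑ m, pd s (r k' m) x * g' m j' x)) = 0 := by
      intro i' k' j'
      have e1 : ∑ t, (pd t (g' i' k') x + ∑ s, g k' s * pd s (r i' t) x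
            - ∑ s, g i' s * pd s (r k' t) x) * g' t j' x
          = ∑ s, (g' j' s x * pd s (g' i' k') x + g' k' s x * pd s (g' i' j') x
            - g' i' s x * pd s (g' k' j') x) := by
        calc ∑ t, (pd t (g' i' k') x + ∑ s, g k' s * pd s (r i' t) x
              - ∑ s, g i' s * pd s (r k' t) x) * g' t j' x
            = ∑ t, 2 * b' k' i' t x * g' t j' x := by
              refine Finset.sum_congr rfl fun t _ => ?_
              rw [hb i' k' t]
          _ = 2 * ∑ t, b' k' i' t x * g' t j' x := by
              rw [Finset.mul_sum]
              exact Finset.sum_congr rfl fun t _ => by ring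
          _ = _ := hJ1x i' j' k'
      have hB := lemB hU hr hg'def hg'sym hx i' k' j'
      rw [e1, sub_self] at hB
      exact hB.symm
    have hcc : ∀ a b : Fin n, (∑ s, (r s a x * pd s (r i b) x - r s b x * pd s (r i a) x
          - r i s x * pd a (r s b) x + r i s x * pd b (r s a) x)) = 0 := by
      refine conj_cancel g hginv _ (fun i' k' => ?_)
      have hcore := core_ctx hU hgs hr hg'def hg'sym hx i' k' i
      rw [hdel i' k' i] at hcore
      linarith
    exact hcc j k
  · intro hN i j k
    have hdel : ∀ j' : Fin n,
        ∑ s, (g' k s x * pd s (g' i j') x - g' i s x * pd s (g' k j') x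
          - g k s * (∑ m, pd s (r i m) x * g' m j' x)
          + g i s * (∑ m, pd s (r k m) x * g' m j' x)) = 0 := by
      intro j'
      have hcore := core_ctx hU hgs hr hg'def hg'sym hx i k j'
      have hz : ∑ a, ∑ b, g i a * g k b *
          (∑ s, (r s a x * pd s (r j' b) x - r s b x * pd s (r j' a) x
            - r j' s x * pd a (r s b) x + r j' s x * pd b (r s a) x)) = 0 := by
        refine Finset.sum_eq_zero fun a _ => Finset.sum_eq_zero fun b _ => ?_
        rw [hN j' a b, mul_zero]
      rw [hz, add_zero] at hcore
      exact hcore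
    have hbc : (fun t => 2 * b' k i t x)
        = fun t => pd t (g' i k) x + ∑ s, g k s * pd s (r i t) x
            - ∑ s, g i s * pd s (r k t) x := by
      refine vec_cancel (Matrix.of fun α β => g' α β x) (hg'inv x hx) (fun j' => ?_)
      have hB := lemB hU hr hg'def hg'sym hx i k j'
      rw [hdel j'] at hB
      have hB' : ∑ t, (pd t (g' i k) x + ∑ s, g k s * pd s (r i t) x
            - ∑ s, g i s * pd s (r k t) x) * g' t j' x
          = ∑ s, (g' j' s x * pd s (g' i k) x + g' k s x * pd s (g' i j') x
            - g' i s x * pd s (g' k j') x) := by linarith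
      calc ∑ s, 2 * b' k i s x * (Matrix.of fun α β => g' α β x) s j'
          = 2 * ∑ s, b' k i s x * g' s j' x := by
            rw [Finset.mul_sum]
            exact Finset.sum_congr rfl fun s _ => by rw [Matrix.of_apply]; ring
        _ = ∑ s, (g' j' s x * pd s (g' i k) x + g' k s x * pd s (g' i j') x
            - g' i s x * pd s (g' k j') x) := hJ1x i j' k
        _ = ∑ t, (pd t (g' i k) x + ∑ s, g k s * pd s (r i t) x
            - ∑ s, g i s * pd s (r k t) x) * g' t j' x := hB'.symm
        _ = ∑ t, (pd t (g' i k) x + ∑ s, g k s * pd s (r i t) x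
            - ∑ s, g i s * pd s (r k t) x) * (Matrix.of fun α β => g' α β x) t j' := by
            exact Finset.sum_congr rfl fun t _ => by rw [Matrix.of_apply]
    calc 2 * ∑ s, b' k i s x * g s j = ∑ t, 2 * b' k i t x * g t j := by
          rw [Finset.mul_sum]
          exact Finset.sum_congr rfl fun s _ => by ring
      _ = ∑ t, (pd t (g' i k) x + ∑ s, g k s * pd s (r i t) x
            - ∑ s, g i s * pd s (r k t) x) * g t j := by
          refine Finset.sum_congr rfl fun t _ => ?_
          rw [congrFun hbc t]
      _ = ∑ s, (g j s * pd s (g' i k) x + g k s * pd s (g' i j) x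
            - g i s * pd s (g' k j) x) := (lemA hU hgs hr hg'def hx i k j).symm

end C3N
section C4

variable {n : ℕ} {U : Set (Fin n → ℝ)}

private lemma pdb_lemma (hU : IsOpen U) {g : Matrix (Fin n) (Fin n) ℝ}
    {r g' : Fin n → Fin n → (Fin n → ℝ) → ℝ}
    {b' : Fin n → Fin n → Fin n → (Fin n → ℝ) → ℝ}
    (hr : ∀ i j, ContDiffOn ℝ (⊤ : ℕ∞) (r i j) U)
    (hg'def : ∀ i j, g' i j = fun x => ∑ s, r i s x * g s j)
    (hb' : ∀ i j k, ContDiffOn ℝ (⊤ : ℕ∞) (b' i j k) U)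
    (hbf : ∀ y ∈ U, ∀ i j k, 2 * b' i j k y
      = ∑ s, (g i s * pd s (r j k) y - g j s * pd s (r i k) y) + pd k (g' i j) y)
    {x : Fin n → ℝ} (hx : x ∈ U) (s i k m : Fin n) :
    2 * pd s (b' i k m) x
      = ∑ t, (g i t * pd s (pd t (r k m)) x - g k t * pd s (pd t (r i m)) x)
        + pd s (pd m (g' i k)) x := by
  have dD : ∀ t γ μ : Fin n, DifferentiableAt ℝ (pd t (r γ μ)) x :=
    fun t γ μ => diffAt_pd hU t (hr γ μ) hx
  have dG : DifferentiableAt ℝ (pd m (g' i k)) x :=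
    diffAt_pd hU m (g'_cd hU hr hg'def i k) hx
  have dterm : ∀ t : Fin n, DifferentiableAt ℝ
      (fun y => g i t * pd t (r k m) y - g k t * pd t (r i m) y) x :=
    fun t => ((dD t k m).const_mul _).sub ((dD t i m).const_mul _)
  have dsum : DifferentiableAt ℝ
      (fun y => ∑ t, (g i t * pd t (r k m) y - g k t * pd t (r i m) y)) x :=
    DifferentiableAt.fun_sum fun t _ => dterm t
  calc 2 * pd s (b' i k m) x
      = pd s (fun y => 2 * b' i k m y) x :=
        (pd_const_mul s (diffAt_of_cd hU (hb' i k m) hx) 2).symm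
    _ = pd s (fun y => (∑ t, (g i t * pd t (r k m) y - g k t * pd t (r i m) y))
          + pd m (g' i k) y) x := by
        refine pd_congr_on hU hx (fun y hy => ?_)
        exact hbf y hy i k m
    _ = pd s (fun y => ∑ t, (g i t * pd t (r k m) y - g k t * pd t (r i m) y)) x
        + pd s (pd m (g' i k)) x := pd_add s dsum dG
    _ = ∑ t, (g i t * pd s (pd t (r k m)) x - g k t * pd s (pd t (r i m)) x)
        + pd s (pd m (g' i k)) x := by
        rw [pd_sum s Finset.univ _ (fun t _ => dterm t)]
        congr 1
        refine Finset.sum_congr rfl fun t _ => ?_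
        rw [pd_sub s ((dD t k m).const_mul _) ((dD t i m).const_mul _),
          pd_const_mul s (dD t k m) _, pd_const_mul s (dD t i m) _]

private lemma c4_iff_2_pt (hU : IsOpen U) {g : Matrix (Fin n) (Fin n) ℝ}
    (hgs : ∀ i j : Fin n, g i j = g j i) (hginv : g.det ≠ 0)
    {r g' : Fin n → Fin n → (Fin n → ℝ) → ℝ}
    {b' : Fin n → Fin n → Fin n → (Fin n → ℝ) → ℝ}
    (hr : ∀ i j, ContDiffOn ℝ (⊤ : ℕ∞) (r i j) U)
    (hg'def : ∀ i j, g' i j = fun x => ∑ s, r i s x * g s j)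
    (hg'sym : ∀ x ∈ U, ∀ i j, g' i j x = g' j i x)
    (hb' : ∀ i j k, ContDiffOn ℝ (⊤ : ℕ∞) (b' i j k) U)
    (hbf : ∀ y ∈ U, ∀ i j k, 2 * b' i j k y
      = ∑ s, (g i s * pd s (r j k) y - g j s * pd s (r i k) y) + pd k (g' i j) y)
    {x : Fin n → ℝ} (hx : x ∈ U) :
    (∀ i j k m : Fin n, ∑ s, (g j s * pd s (b' i k m) x - g i s * pd s (b' j k m) x) = 0)
    ↔ (∀ i j k l : Fin n, ∑ s, ∑ t, (g i s * g j t * pd s (pd t (g' k l)) x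
        + g k s * g l t * pd s (pd t (g' i j)) x
        - g i s * g k t * pd s (pd t (g' j l)) x
        - g j s * g l t * pd s (pd t (g' i k)) x) = 0) := by
  have dD : ∀ t γ μ : Fin n, DifferentiableAt ℝ (pd t (r γ μ)) x :=
    fun t γ μ => diffAt_pd hU t (hr γ μ) hx
  set M : Fin n → Fin n → Fin n → Fin n → ℝ :=
    fun α β γ m => ∑ s, ∑ t, g α s * g β t * pd s (pd t (r γ m)) x with hM
  set L : Fin n → Fin n → Fin n → Fin n → ℝ :=
    fun α β γ m => ∑ s, g α s * pd s (pd m (g' β γ)) x with hL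
  have eEE : ∀ s t γ l : Fin n, pd s (pd t (g' γ l)) x
      = ∑ u, pd s (pd t (r γ u)) x * g u l := by
    intro s t γ l
    have h1 : pd s (pd t (g' γ l)) x
        = pd s (fun y => ∑ u, pd t (r γ u) y * g u l) x :=
      pd_congr_on hU hx (fun y hy => pd_g'_eq hU hr hg'def hy t γ l)
    rw [h1, pd_sum s Finset.univ _ (fun u _ => (dD t γ u).mul_const _)]
    exact Finset.sum_congr rfl fun u _ => pd_mul_const s (dD t γ u) _
  have Msym : ∀ α β γ m : Fin n, M α β γ m = M β α γ m := by
    intro α β γ m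
    rw [hM]
    refine Finset.sum_comm.trans (Finset.sum_congr rfl fun t _ =>
      Finset.sum_congr rfl fun s _ => ?_)
    rw [pd_comm hU (hr γ m) hx s t]; ring
  have Lsym : ∀ α β γ m : Fin n, L α β γ m = L α γ β m := by
    intro α β γ m
    rw [hL]
    refine Finset.sum_congr rfl fun s _ => ?_
    congr 1
    exact pd_congr_on hU hx (fun y hy => pd_congr_on hU hy (fun z hz => hg'sym z hz β γ))
  have expand1 : ∀ (c E : ℝ) (P Q : Fin n → ℝ),
      c * ((∑ t, (P t - Q t)) + E) = (∑ t, c * P t) - (∑ t, c * Q t) + c * E := by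
    intro c E P Q
    rw [mul_add, Finset.mul_sum, ← Finset.sum_sub_distrib]
    congr 1
    exact Finset.sum_congr rfl fun t _ => by ring
  have m3 : ∀ i j k m : Fin n,
      2 * (∑ s, (g j s * pd s (b' i k m) x - g i s * pd s (b' j k m) x))
      = M j i k m - M j k i m + L j i k m - M i j k m + M i k j m - L i j k m := by
    intro i j k m
    calc 2 * (∑ s, (g j s * pd s (b' i k m) x - g i s * pd s (b' j k m) x))
        = ∑ s, (g j s * (2 * pd s (b' i k m) x) - g i s * (2 * pd s (b' j k m) x)) := by
          rw [Finset.mul_sum]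
          exact Finset.sum_congr rfl fun s _ => by ring
      _ = M j i k m - M j k i m + L j i k m - M i j k m + M i k j m - L i j k m := by
          simp only [hM, hL]
          rw [← Finset.sum_sub_distrib, ← Finset.sum_add_distrib, ← Finset.sum_sub_distrib,
            ← Finset.sum_add_distrib, ← Finset.sum_sub_distrib]
          refine Finset.sum_congr rfl fun s _ => ?_
          rw [pdb_lemma hU hr hg'def hb' hbf hx s i k m,
            pdb_lemma hU hr hg'def hb' hbf hx s j k m]
          rw [expand1, expand1]
          simp only [mul_assoc]
          ring
  have m5 : ∀ i j k l : Fin n,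
      ∑ s, ∑ t, (g i s * g j t * pd s (pd t (g' k l)) x
        + g k s * g l t * pd s (pd t (g' i j)) x
        - g i s * g k t * pd s (pd t (g' j l)) x
        - g j s * g l t * pd s (pd t (g' i k)) x)
      = ∑ m, (M i j k m - M i k j m + L k i j m - L j i k m) * g m l := by
    intro i j k l
    have term1 : ∀ α β γ : Fin n, ∑ s, ∑ t, g α s * g β t * pd s (pd t (g' γ l)) x
        = ∑ m, (M α β γ m) * g m l := by
      intro α β γ
      calc ∑ s, ∑ t, g α s * g β t * pd s (pd t (g' γ l)) x
          = ∑ s, ∑ t, ∑ u, g α s * g β t * (pd s (pd t (r γ u)) x * g u l) := by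
            refine Finset.sum_congr rfl fun s _ => Finset.sum_congr rfl fun t _ => ?_
            rw [eEE s t γ l, Finset.mul_sum]
        _ = ∑ s, ∑ u, ∑ t, g α s * g β t * (pd s (pd t (r γ u)) x * g u l) :=
            Finset.sum_congr rfl fun s _ => Finset.sum_comm
        _ = ∑ u, ∑ s, ∑ t, g α s * g β t * (pd s (pd t (r γ u)) x * g u l) :=
            Finset.sum_comm
        _ = ∑ m, (M α β γ m) * g m l := by
            refine Finset.sum_congr rfl fun u _ => ?_
            simp only [hM]
            rw [Finset.sum_mul]
            refine Finset.sum_congr rfl fun s _ => ?_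
            rw [Finset.sum_mul]
            exact Finset.sum_congr rfl fun t _ => by ring
    have term2 : ∀ α β γ : Fin n, ∑ s, ∑ t, g α s * g l t * pd s (pd t (g' β γ)) x
        = ∑ m, (L α β γ m) * g m l := by
      intro α β γ
      calc ∑ s, ∑ t, g α s * g l t * pd s (pd t (g' β γ)) x
          = ∑ t, ∑ s, g α s * g l t * pd s (pd t (g' β γ)) x := Finset.sum_comm
        _ = ∑ m, (L α β γ m) * g m l := by
            refine Finset.sum_congr rfl fun t _ => ?_
            simp only [hL]
            rw [Finset.sum_mul, hgs l t]
            refine Finset.sum_congr rfl fun s _ => by ring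
    calc ∑ s, ∑ t, (g i s * g j t * pd s (pd t (g' k l)) x
          + g k s * g l t * pd s (pd t (g' i j)) x
          - g i s * g k t * pd s (pd t (g' j l)) x
          - g j s * g l t * pd s (pd t (g' i k)) x)
        = (∑ s, ∑ t, g i s * g j t * pd s (pd t (g' k l)) x)
          + (∑ s, ∑ t, g k s * g l t * pd s (pd t (g' i j)) x)
          - (∑ s, ∑ t, g i s * g k t * pd s (pd t (g' j l)) x)
          - (∑ s, ∑ t, g j s * g l t * pd s (pd t (g' i k)) x) := by
          symm
          rw [← Finset.sum_add_distrib, ← Finset.sum_sub_distrib, ← Finset.sum_sub_distrib]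
          refine Finset.sum_congr rfl fun s _ => ?_
          rw [← Finset.sum_add_distrib, ← Finset.sum_sub_distrib, ← Finset.sum_sub_distrib]
      _ = (∑ m, (M i j k m) * g m l) + (∑ m, (L k i j m) * g m l)
          - (∑ m, (M i k j m) * g m l) - (∑ m, (L j i k m) * g m l) := by
          rw [term1 i j k, term1 i k j, term2 k i j, term2 j i k]
      _ = ∑ m, (M i j k m - M i k j m + L k i j m - L j i k m) * g m l := by
          rw [← Finset.sum_add_distrib, ← Finset.sum_sub_distrib, ← Finset.sum_sub_distrib]
          exact Finset.sum_congr rfl fun m _ => by ring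
  constructor
  · intro hC4 i j k l
    rw [m5 i j k l]
    refine Finset.sum_eq_zero fun m _ => ?_
    have h34 := m3 j k i m
    rw [hC4 j k i m, mul_zero] at h34
    rw [Msym k j i m, Msym k i j m, Msym j i k m, Lsym k j i m, Lsym j k i m] at h34
    have : M i j k m - M i k j m + L k i j m - L j i k m = 0 := by linarith
    rw [this, zero_mul]
  · intro hY i j k m
    have hZ : (fun m' => M k i j m' - M k j i m' + L j k i m' - L i k j m')
        = fun _ => (0 : ℝ) := by
      refine vec_cancel g hginv (fun l => ?_)
      rw [← m5 k i j l, hY k i j l]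
      symm
      exact Finset.sum_eq_zero fun m' _ => by rw [zero_mul]
    have h34 := m3 i j k m
    rw [Msym j i k m, Msym i k j m, Msym j k i m, Lsym j i k m, Lsym i j k m] at h34
    have hZm := congrFun hZ m
    linarith [h34, hZm]

end C4

/-- Theorem 1 in flat coordinates of the first metric: with `g` a constant flat metric
and `g̃^{ij} = Σ_s r^i_s g^{sj}`, the compatibility conditions (C3), (C4) hold iff the
Nijenhuis tensor of `r` vanishes and the second-order condition (2) holds; moreover, in
that case `2b̃^{ij}_k = Σ_s (g^{is}∂_s r^j_k − g^{js}∂_s r^i_k) + ∂_k g̃^{ij}`. -/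
theorem theorem1_flat_coordinates {n : ℕ} (U : Set (Fin n → ℝ)) (hU : IsOpen U)
    (g : Matrix (Fin n) (Fin n) ℝ) (hgsym : g.IsSymm) (hginv : g.det ≠ 0)
    (r : Fin n → Fin n → (Fin n → ℝ) → ℝ)
    (hr : ∀ i j, ContDiffOn ℝ (⊤ : ℕ∞) (r i j) U)
    (hrinv : ∀ x ∈ U, (Matrix.of fun i j => r i j x).det ≠ 0)
    (g' : Fin n → Fin n → (Fin n → ℝ) → ℝ)
    (hg'def : ∀ i j, g' i j = fun x => ∑ s, r i s x * g s j)
    (hg'sym : ∀ x ∈ U, ∀ i j, g' i j x = g' j i x)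
    (hg'inv : ∀ x ∈ U, (Matrix.of fun i j => g' i j x).det ≠ 0)
    (b' : Fin n → Fin n → Fin n → (Fin n → ℝ) → ℝ)
    (hb' : ∀ i j k, ContDiffOn ℝ (⊤ : ℕ∞) (b' i j k) U)
    (hJ1' : J1cond U g' b') (hJ2' : J2cond U g' b') :
    (((∀ x ∈ U, ∀ i j k : Fin n,
          2 * ∑ s, b' k i s x * g s j =
            ∑ s, (g j s * pd s (g' i k) x + g k s * pd s (g' i j) x
              - g i s * pd s (g' k j) x)) ∧
       (∀ x ∈ U, ∀ i j k m : Fin n,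
          ∑ s, (g j s * pd s (b' i k m) x - g i s * pd s (b' j k m) x) = 0)) ↔
      ((∀ x ∈ U, ∀ i j k : Fin n,
          ∑ s, (r s j x * pd s (r i k) x - r s k x * pd s (r i j) x
            - r i s x * pd j (r s k) x + r i s x * pd k (r s j) x) = 0) ∧
       (∀ x ∈ U, ∀ i j k l : Fin n,
          ∑ s, ∑ t, (g i s * g j t * pd s (pd t (g' k l)) x
            + g k s * g l t * pd s (pd t (g' i j)) x
            - g i s * g k t * pd s (pd t (g' j l)) x
            - g j s * g l t * pd s (pd t (g' i k)) x) = 0))) ∧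
    (((∀ x ∈ U, ∀ i j k : Fin n,
          2 * ∑ s, b' k i s x * g s j =
            ∑ s, (g j s * pd s (g' i k) x + g k s * pd s (g' i j) x
              - g i s * pd s (g' k j) x)) ∧
       (∀ x ∈ U, ∀ i j k m : Fin n,
          ∑ s, (g j s * pd s (b' i k m) x - g i s * pd s (b' j k m) x) = 0)) →
      ∀ x ∈ U, ∀ i j k : Fin n,
        2 * b' i j k x =
          ∑ s, (g i s * pd s (r j k) x - g j s * pd s (r i k) x) + pd k (g' i j) x) := by
  have hgs : ∀ i j : Fin n, g i j = g j i := fun i j => by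
    have h := congrFun (congrFun hgsym j) i
    simpa [Matrix.transpose_apply] using h
  constructor
  · constructor
    · rintro ⟨hC3, hC4⟩
      refine ⟨fun x hx =>
        (c3_iff_N hU hgs hginv hr hg'def hg'sym hg'inv hJ1' hx).mp (hC3 x hx), ?_⟩
      intro x hx
      have hbf : ∀ y ∈ U, ∀ i j k : Fin n, 2 * b' i j k y
          = ∑ s, (g i s * pd s (r j k) y - g j s * pd s (r i k) y) + pd k (g' i j) y :=
        fun y hy => bform hU hgs hginv hr hg'def hg'sym hy (hC3 y hy)
      exact (c4_iff_2_pt hU hgs hginv hr hg'def hg'sym hb' hbf hx).mp (hC4 x hx)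
    · rintro ⟨hN, hY⟩
      have hC3 : ∀ x ∈ U, ∀ i j k : Fin n,
          2 * ∑ s, b' k i s x * g s j
            = ∑ s, (g j s * pd s (g' i k) x + g k s * pd s (g' i j) x
              - g i s * pd s (g' k j) x) :=
        fun x hx => (c3_iff_N hU hgs hginv hr hg'def hg'sym hg'inv hJ1' hx).mpr (hN x hx)
      refine ⟨hC3, ?_⟩
      intro x hx
      have hbf : ∀ y ∈ U, ∀ i j k : Fin n, 2 * b' i j k y
          = ∑ s, (g i s * pd s (r j k) y - g j s * pd s (r i k) y) + pd k (g' i j) y :=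
        fun y hy => bform hU hgs hginv hr hg'def hg'sym hy (hC3 y hy)
      exact (c4_iff_2_pt hU hgs hginv hr hg'def hg'sym hb' hbf hx).mpr (hY x hx)
  · rintro ⟨hC3, -⟩ x hx i j k
    exact bform hU hgs hginv hr hg'def hg'sym hx (hC3 x hx) i j k
end

section
/- Let U ⊆ ℝⁿ be open, let g = (g^{ij}) be a constant symmetric invertible n×n real matrix, and let r = (r^i_j) : U → GL_n(ℝ) be smooth with g̃^{ij} := Σ_s r^i_s g^{sj} symmetric and invertible at each point. Let b̃ = (b̃^{ij}_k) be smooth on U satisfying (J1) for the pair (g̃, b̃), i.e. 2Σ_s b̃^{ki}_s g̃^{sj} = Σ_s(g̃^{js}∂_s g̃^{ik} + g̃^{ks}∂_s g̃^{ij} − g̃^{is}∂_s g̃^{kj}) for all i,j,k. If in addition the compatibility condition (C3): 2Σ_s b̃^{ki}_s g^{sj} = Σ_s(g^{js}∂_s g̃^{ik} + g^{ks}∂_s g̃^{ij} − g^{is}∂_s g̃^{kj}) holds for all i,j,k, then the Nijenhuis tensor of r vanishes identically on U. -/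
open scoped BigOperators

private lemma sum_comm3 {n : ℕ} (f : Fin n → Fin n → Fin n → ℝ) :
    ∑ a, ∑ b, ∑ c, f a b c = ∑ b, ∑ c, ∑ a, f a b c := by
  rw [Finset.sum_comm]
  exact Finset.sum_congr rfl fun b _ => Finset.sum_comm

private lemma alg_key {n : ℕ} (G R GT : Fin n → Fin n → ℝ)
    (D DG B : Fin n → Fin n → Fin n → ℝ)
    (hGsym : ∀ a b, G a b = G b a)
    (hGT : ∀ a b, GT a b = ∑ u, R a u * G u b)
    (hGTsym : ∀ a b, GT a b = GT b a)
    (hDG : ∀ t a b, DG t a b = ∑ u, D t a u * G u b)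
    (hDGsym : ∀ t a b, DG t a b = DG t b a)
    (hJ1 : ∀ i j k, 2 * ∑ s, B k i s * GT s j =
      ∑ s, (GT j s * DG s i k + GT k s * DG s i j - GT i s * DG s k j))
    (hC3 : ∀ i j k, 2 * ∑ s, B k i s * G s j =
      ∑ s, (G j s * DG s i k + G k s * DG s i j - G i s * DG s k j))
    (a i b : Fin n) :
    ∑ j, ∑ k, G a j * (∑ s, (R s j * D s i k - R s k * D s i j
      - R i s * D j s k + R i s * D k s j)) * G k b = 0 := by
  -- step0 : contracted derivative identity
  have hV : ∀ t c e : Fin n, (∑ s, R e s * DG t s c) = ∑ u, D t c u * GT u e := by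
    intro t c e
    calc ∑ s, R e s * DG t s c = ∑ s, R e s * DG t c s :=
          Finset.sum_congr rfl fun s _ => by rw [hDGsym t s c]
      _ = ∑ s, R e s * ∑ u, D t c u * G u s :=
          Finset.sum_congr rfl fun s _ => by rw [hDG t c s]
      _ = ∑ s, ∑ u, R e s * (D t c u * G u s) :=
          Finset.sum_congr rfl fun s _ => Finset.mul_sum _ _ _
      _ = ∑ u, ∑ s, R e s * (D t c u * G u s) := Finset.sum_comm
      _ = ∑ u, D t c u * ∑ s, R e s * G s u := by
          refine Finset.sum_congr rfl fun u _ => ?_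
          rw [Finset.mul_sum]
          exact Finset.sum_congr rfl fun s _ => by rw [hGsym u s]; ring
      _ = ∑ u, D t c u * GT e u :=
          Finset.sum_congr rfl fun u _ => by rw [← hGT e u]
      _ = ∑ u, D t c u * GT u e :=
          Finset.sum_congr rfl fun u _ => by rw [hGTsym e u]
  -- step1 : the key identity (★)
  have hstar : ∀ i j k : Fin n,
      (∑ s, GT k s * DG s i j) - (∑ s, GT i s * DG s k j)
        = (∑ s, G k s * ∑ u, D s i u * GT u j) - (∑ s, G i s * ∑ u, D s k u * GT u j) := by
    intro i j k
    have h2 : ∑ t, R j t * (2 * ∑ s, B k i s * G s t)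
        = ∑ t, R j t * (∑ s, (G t s * DG s i k + G k s * DG s i t - G i s * DG s k t)) :=
      Finset.sum_congr rfl fun t _ => by rw [hC3 i t k]
    have hLeft : ∑ t, R j t * (2 * ∑ s, B k i s * G s t) = 2 * ∑ s, B k i s * GT s j := by
      calc ∑ t, R j t * (2 * ∑ s, B k i s * G s t)
          = ∑ t, ∑ s, R j t * (2 * (B k i s * G s t)) := by
            refine Finset.sum_congr rfl fun t _ => ?_
            rw [Finset.mul_sum, Finset.mul_sum]
        _ = ∑ s, ∑ t, R j t * (2 * (B k i s * G s t)) := Finset.sum_comm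
        _ = ∑ s, 2 * B k i s * ∑ t, R j t * G t s := by
            refine Finset.sum_congr rfl fun s _ => ?_
            rw [Finset.mul_sum]
            exact Finset.sum_congr rfl fun t _ => by rw [hGsym s t]; ring
        _ = ∑ s, 2 * B k i s * GT j s :=
            Finset.sum_congr rfl fun s _ => by rw [← hGT j s]
        _ = ∑ s, 2 * (B k i s * GT s j) :=
            Finset.sum_congr rfl fun s _ => by rw [hGTsym j s]; ring
        _ = 2 * ∑ s, B k i s * GT s j := (Finset.mul_sum _ _ _).symm
    have hRight : ∑ t, R j t * (∑ s, (G t s * DG s i k + G k s * DG s i t - G i s * DG s k t))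
        = (∑ s, GT j s * DG s i k) + (∑ s, G k s * ∑ u, D s i u * GT u j)
          - (∑ s, G i s * ∑ u, D s k u * GT u j) := by
      calc ∑ t, R j t * (∑ s, (G t s * DG s i k + G k s * DG s i t - G i s * DG s k t))
          = ∑ t, ∑ s, (R j t * G t s * DG s i k + G k s * (R j t * DG s i t)
              - G i s * (R j t * DG s k t)) := by
            refine Finset.sum_congr rfl fun t _ => ?_
            rw [Finset.mul_sum]
            exact Finset.sum_congr rfl fun s _ => by ring
        _ = ∑ s, ∑ t, (R j t * G t s * DG s i k + G k s * (R j t * DG s i t)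
              - G i s * (R j t * DG s k t)) := Finset.sum_comm
        _ = ∑ s, ((∑ t, R j t * G t s) * DG s i k + G k s * (∑ t, R j t * DG s i t)
              - G i s * (∑ t, R j t * DG s k t)) := by
            refine Finset.sum_congr rfl fun s _ => ?_
            rw [Finset.sum_sub_distrib, Finset.sum_add_distrib, ← Finset.sum_mul,
              ← Finset.mul_sum, ← Finset.mul_sum]
        _ = ∑ s, (GT j s * DG s i k + G k s * (∑ u, D s i u * GT u j)
              - G i s * (∑ u, D s k u * GT u j)) := by
            refine Finset.sum_congr rfl fun s _ => ?_
            have e1 : ∑ t, R j t * DG s i t = ∑ u, D s i u * GT u j := by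
              calc ∑ t, R j t * DG s i t = ∑ t, R j t * DG s t i :=
                    Finset.sum_congr rfl fun t _ => by rw [hDGsym s i t]
                _ = ∑ u, D s i u * GT u j := hV s i j
            have e2 : ∑ t, R j t * DG s k t = ∑ u, D s k u * GT u j := by
              calc ∑ t, R j t * DG s k t = ∑ t, R j t * DG s t k :=
                    Finset.sum_congr rfl fun t _ => by rw [hDGsym s k t]
                _ = ∑ u, D s k u * GT u j := hV s k j
            rw [e1, e2, ← hGT j s]
        _ = (∑ s, GT j s * DG s i k) + (∑ s, G k s * ∑ u, D s i u * GT u j)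
              - (∑ s, G i s * ∑ u, D s k u * GT u j) := by
            rw [Finset.sum_sub_distrib, Finset.sum_add_distrib]
    have hJ := hJ1 i j k
    rw [Finset.sum_sub_distrib, Finset.sum_add_distrib] at hJ
    have hcomb : (∑ s, GT j s * DG s i k) + (∑ s, GT k s * DG s i j)
        - (∑ s, GT i s * DG s k j)
        = (∑ s, GT j s * DG s i k) + (∑ s, G k s * ∑ u, D s i u * GT u j)
          - (∑ s, G i s * ∑ u, D s k u * GT u j) := by
      rw [← hJ, ← hRight, ← h2, hLeft]
    linarith [hcomb]
  -- step2 : expand the Nijenhuis contraction and match with ★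
  have E1 : ∑ s, GT a s * DG s b i
      = ∑ j, ∑ k, ∑ s, G a j * (R s j * D s i k) * G k b := by
    calc ∑ s, GT a s * DG s b i = ∑ s, GT s a * DG s i b :=
          Finset.sum_congr rfl fun s _ => by rw [hGTsym a s, hDGsym s b i]
      _ = ∑ s, (∑ j, R s j * G j a) * ∑ k, D s i k * G k b :=
          Finset.sum_congr rfl fun s _ => by rw [hGT s a, hDG s i b]
      _ = ∑ s, ∑ j, ∑ k, (R s j * G j a) * (D s i k * G k b) :=
          Finset.sum_congr rfl fun s _ => Finset.sum_mul_sum _ _ _ _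
      _ = ∑ j, ∑ k, ∑ s, (R s j * G j a) * (D s i k * G k b) := sum_comm3 _
      _ = ∑ j, ∑ k, ∑ s, G a j * (R s j * D s i k) * G k b := by
          refine Finset.sum_congr rfl fun j _ => Finset.sum_congr rfl fun k _ =>
            Finset.sum_congr rfl fun s _ => ?_
          rw [hGsym a j]; ring
  have E2 : ∑ s, GT b s * DG s a i
      = ∑ j, ∑ k, ∑ s, G a j * (R s k * D s i j) * G k b := by
    calc ∑ s, GT b s * DG s a i = ∑ s, GT s b * DG s i a :=
          Finset.sum_congr rfl fun s _ => by rw [hGTsym b s, hDGsym s a i]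
      _ = ∑ s, (∑ j, D s i j * G j a) * ∑ k, R s k * G k b := by
          refine Finset.sum_congr rfl fun s _ => ?_
          rw [hGT s b, hDG s i a]; ring
      _ = ∑ s, ∑ j, ∑ k, (D s i j * G j a) * (R s k * G k b) :=
          Finset.sum_congr rfl fun s _ => Finset.sum_mul_sum _ _ _ _
      _ = ∑ j, ∑ k, ∑ s, (D s i j * G j a) * (R s k * G k b) := sum_comm3 _
      _ = ∑ j, ∑ k, ∑ s, G a j * (R s k * D s i j) * G k b := by
          refine Finset.sum_congr rfl fun j _ => Finset.sum_congr rfl fun k _ =>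
            Finset.sum_congr rfl fun s _ => ?_
          rw [hGsym a j]; ring
  have E3 : ∑ s, G a s * ∑ u, D s b u * GT u i
      = ∑ j, ∑ k, ∑ s, G a j * (R i s * D j s k) * G k b := by
    calc ∑ s, G a s * ∑ u, D s b u * GT u i
        = ∑ s, G a s * ∑ t, R i t * DG s t b :=
          Finset.sum_congr rfl fun s _ => by rw [hV s b i]
      _ = ∑ j, ∑ s, ∑ k, G a j * (R i s * (D j s k * G k b)) := by
          refine Finset.sum_congr rfl fun j _ => ?_
          rw [Finset.mul_sum]
          refine Finset.sum_congr rfl fun s _ => ?_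
          rw [hDG j s b, Finset.mul_sum, Finset.mul_sum]
      _ = ∑ j, ∑ k, ∑ s, G a j * (R i s * (D j s k * G k b)) :=
          Finset.sum_congr rfl fun j _ => Finset.sum_comm
      _ = ∑ j, ∑ k, ∑ s, G a j * (R i s * D j s k) * G k b := by
          refine Finset.sum_congr rfl fun j _ => Finset.sum_congr rfl fun k _ =>
            Finset.sum_congr rfl fun s _ => ?_
          ring
  have E4 : ∑ s, G b s * ∑ u, D s a u * GT u i
      = ∑ j, ∑ k, ∑ s, G a j * (R i s * D k s j) * G k b := by
    calc ∑ s, G b s * ∑ u, D s a u * GT u i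
        = ∑ s, G b s * ∑ t, R i t * DG s t a :=
          Finset.sum_congr rfl fun s _ => by rw [hV s a i]
      _ = ∑ k, ∑ s, ∑ j, G b k * (R i s * (D k s j * G j a)) := by
          refine Finset.sum_congr rfl fun k _ => ?_
          rw [Finset.mul_sum]
          refine Finset.sum_congr rfl fun s _ => ?_
          rw [hDG k s a, Finset.mul_sum, Finset.mul_sum]
      _ = ∑ s, ∑ j, ∑ k, G b k * (R i s * (D k s j * G j a)) := sum_comm3 _
      _ = ∑ j, ∑ k, ∑ s, G b k * (R i s * (D k s j * G j a)) := sum_comm3 _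
      _ = ∑ j, ∑ k, ∑ s, G a j * (R i s * D k s j) * G k b := by
          refine Finset.sum_congr rfl fun j _ => Finset.sum_congr rfl fun k _ =>
            Finset.sum_congr rfl fun s _ => ?_
          rw [hGsym a j, hGsym b k]; ring
  have expand : ∑ j, ∑ k, G a j * (∑ s, (R s j * D s i k - R s k * D s i j
      - R i s * D j s k + R i s * D k s j)) * G k b
      = (∑ j, ∑ k, ∑ s, G a j * (R s j * D s i k) * G k b)
        - (∑ j, ∑ k, ∑ s, G a j * (R s k * D s i j) * G k b)
        - (∑ j, ∑ k, ∑ s, G a j * (R i s * D j s k) * G k b)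
        + (∑ j, ∑ k, ∑ s, G a j * (R i s * D k s j) * G k b) := by
    have h : ∀ j k : Fin n, G a j * (∑ s, (R s j * D s i k - R s k * D s i j
        - R i s * D j s k + R i s * D k s j)) * G k b
        = ∑ s, (G a j * (R s j * D s i k) * G k b - G a j * (R s k * D s i j) * G k b
          - G a j * (R i s * D j s k) * G k b + G a j * (R i s * D k s j) * G k b) := by
      intro j k
      rw [Finset.mul_sum, Finset.sum_mul]
      exact Finset.sum_congr rfl fun s _ => by ring
    calc ∑ j, ∑ k, G a j * (∑ s, (R s j * D s i k - R s k * D s i j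
          - R i s * D j s k + R i s * D k s j)) * G k b
        = ∑ j, ∑ k, ∑ s, (G a j * (R s j * D s i k) * G k b
            - G a j * (R s k * D s i j) * G k b
            - G a j * (R i s * D j s k) * G k b
            + G a j * (R i s * D k s j) * G k b) :=
          Finset.sum_congr rfl fun j _ => Finset.sum_congr rfl fun k _ => h j k
      _ = _ := by
          simp only [Finset.sum_add_distrib, Finset.sum_sub_distrib]
  have hs := hstar b i a
  rw [expand, ← E1, ← E2, ← E3, ← E4]
  linarith [hs]

/-- If `(g̃, b̃)` satisfies (J1) and the compatibility condition (C3) with the constant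
flat metric `g` holds, then the Nijenhuis tensor of `r^i_j` (where `g̃^{ij} = Σ_s r^i_s g^{sj}`)
vanishes identically on `U`. -/
theorem nijenhuis_vanishes_of_C3 {n : ℕ} (U : Set (Fin n → ℝ)) (hU : IsOpen U)
    (g : Matrix (Fin n) (Fin n) ℝ) (hgsym : g.IsSymm) (hginv : g.det ≠ 0)
    (r : Fin n → Fin n → (Fin n → ℝ) → ℝ)
    (hr : ∀ i j, ContDiffOn ℝ (⊤ : ℕ∞) (r i j) U)
    (hrinv : ∀ x ∈ U, (Matrix.of fun i j => r i j x).det ≠ 0)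
    (g' : Fin n → Fin n → (Fin n → ℝ) → ℝ)
    (hg'def : ∀ i j, g' i j = fun x => ∑ s, r i s x * g s j)
    (hg'sym : ∀ x ∈ U, ∀ i j, g' i j x = g' j i x)
    (hg'inv : ∀ x ∈ U, (Matrix.of fun i j => g' i j x).det ≠ 0)
    (b' : Fin n → Fin n → Fin n → (Fin n → ℝ) → ℝ)
    (hb' : ∀ i j k, ContDiffOn ℝ (⊤ : ℕ∞) (b' i j k) U)
    (hJ1' : ∀ x ∈ U, ∀ i j k : Fin n,
      2 * ∑ s, b' k i s x * g' s j x =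
        ∑ s, (g' j s x * pd s (g' i k) x + g' k s x * pd s (g' i j) x
          - g' i s x * pd s (g' k j) x))
    (hC3 : ∀ x ∈ U, ∀ i j k : Fin n,
      2 * ∑ s, b' k i s x * g s j =
        ∑ s, (g j s * pd s (g' i k) x + g k s * pd s (g' i j) x
          - g i s * pd s (g' k j) x)) :
    ∀ x ∈ U, ∀ i j k : Fin n,
      ∑ s, (r s j x * pd s (r i k) x - r s k x * pd s (r i j) x
        - r i s x * pd j (r s k) x + r i s x * pd k (r s j) x) = 0 := by
  intro x hx i j k
  have hx' : U ∈ nhds x := hU.mem_nhds hx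
  have hdiff : ∀ a b, DifferentiableAt ℝ (r a b) x := fun a b =>
    ((hr a b).contDiffAt hx').differentiableAt (by simp)
  -- derivative of g'
  have hDG : ∀ t a c : Fin n, pd t (g' a c) x = ∑ u, pd t (r a u) x * g u c := by
    intro t a c
    have h1 : HasFDerivAt (fun y => ∑ u, r a u y * g u c)
        (∑ u, g u c • fderiv ℝ (r a u) x) x :=
      HasFDerivAt.fun_sum fun u _ => ((hdiff a u).hasFDerivAt).mul_const (g u c)
    have h2 : pd t (g' a c) x = (∑ u, g u c • fderiv ℝ (r a u) x) (Pi.single t 1) := by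
      rw [show g' a c = fun y => ∑ u, r a u y * g u c from hg'def a c]
      unfold pd
      rw [h1.fderiv]
    rw [h2]
    rw [ContinuousLinearMap.sum_apply]
    exact Finset.sum_congr rfl fun u _ => by
      rw [ContinuousLinearMap.smul_apply, smul_eq_mul]
      unfold pd
      ring
  -- symmetry of the derivative of g'
  have hDGsym : ∀ t a c : Fin n, pd t (g' a c) x = pd t (g' c a) x := by
    intro t a c
    have heq : g' a c =ᶠ[nhds x] g' c a :=
      Filter.eventuallyEq_of_mem hx' fun y hy => hg'sym y hy a c
    unfold pd
    rw [heq.fderiv_eq]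
  -- apply the algebraic key lemma
  have key : ∀ a b : Fin n,
      ∑ j', ∑ k', g a j' * (∑ s, (r s j' x * pd s (r i k') x - r s k' x * pd s (r i j') x
        - r i s x * pd j' (r s k') x + r i s x * pd k' (r s j') x)) * g k' b = 0 := by
    intro a b
    exact alg_key (fun p q => g p q) (fun p q => r p q x) (fun p q => g' p q x)
      (fun t p q => pd t (r p q) x) (fun t p q => pd t (g' p q) x)
      (fun p q s => b' p q s x)
      (fun p q => by exact hgsym.apply q p)
      (fun p q => by show g' p q x = ∑ u, r p u x * g u q; rw [hg'def p q])
      (fun p q => by exact hg'sym x hx p q)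
      hDG hDGsym
      (fun i' j' k' => hJ1' x hx i' j' k')
      (fun i' j' k' => hC3 x hx i' j' k')
      a i b
  -- package as a matrix identity and invert g
  set Nm : Matrix (Fin n) (Fin n) ℝ := Matrix.of fun j' k' =>
    ∑ s, (r s j' x * pd s (r i k') x - r s k' x * pd s (r i j') x
      - r i s x * pd j' (r s k') x + r i s x * pd k' (r s j') x) with hNm
  have hGN : g * Nm * g = 0 := by
    ext a b
    have h3 : (g * Nm * g) a b = ∑ k', (∑ j', g a j' * Nm j' k') * g k' b := by
      simp [Matrix.mul_apply]
    rw [h3]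
    have h4 : ∑ k', (∑ j', g a j' * Nm j' k') * g k' b
        = ∑ j', ∑ k', g a j' * Nm j' k' * g k' b := by
      rw [Finset.sum_comm]
      exact Finset.sum_congr rfl fun j' _ => Finset.sum_mul _ _ _
    rw [h4]
    have := key a b
    simpa [hNm] using this
  have hu : IsUnit g.det := isUnit_iff_ne_zero.mpr hginv
  have : Invertible g := g.invertibleOfIsUnitDet hu
  have hzero : Nm = 0 := by
    have h1 : ⅟g * (g * Nm * g) * ⅟g = Nm := by
      rw [mul_assoc g Nm g, ← mul_assoc (⅟g) g (Nm * g), invOf_mul_self, one_mul,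
        mul_assoc Nm g (⅟g), mul_invOf_self, mul_one]
    rw [← h1, hGN, mul_zero, zero_mul]
  have := congrFun (congrFun hzero j) k
  simpa [hNm] using this
end

section
/- Let U ⊆ ℝⁿ be open, let g = (g^{ij}) be a constant symmetric invertible n×n real matrix, and let r = (r^i_j) : U → M_n(ℝ) be smooth with g̃^{ij} := Σ_s r^i_s g^{sj} symmetric (g̃^{ij} = g̃^{ji}). Define 2b̃^{ij}_k := Σ_s(g^{is}∂_s r^j_k − g^{js}∂_s r^i_k) + ∂_k g̃^{ij}. If the Nijenhuis tensor of r vanishes identically on U, then the identity (I2) holds on U: Σ_s b̃^{ik}_s g̃^{sj} = Σ_s b̃^{jk}_s g̃^{si} for all i,j,k. -/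
open scoped BigOperators

open Finset in
private lemma key {n : ℕ} (g : Matrix (Fin n) (Fin n) ℝ)
    (hg : ∀ a b, g a b = g b a)
    (ρ : Fin n → Fin n → ℝ) (d : Fin n → Fin n → Fin n → ℝ)
    (hB : ∀ a b, ∑ s, ρ a s * g s b = ∑ s, ρ b s * g s a)
    (hC : ∀ t a b, ∑ s, d t a s * g s b = ∑ s, d t b s * g s a)
    (hD : ∀ a b c, ∑ s, (ρ s b * d s a c - ρ s c * d s a b
        - ρ a s * d b s c + ρ a s * d c s b) = 0)
    (i j k : Fin n) :
    ∑ s, ((∑ t, (g i t * d t k s - g k t * d t i s)) + ∑ t, d s i t * g t k)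
        * (∑ u, ρ s u * g u j)
      = ∑ s, ((∑ t, (g j t * d t k s - g k t * d t j s)) + ∑ t, d s j t * g t k)
        * (∑ u, ρ s u * g u i) := by
  -- S b a c := ∑ s, ρ s b * (∑ t, d s a t * g t c); symmetric in (a,c)
  have hSsym : ∀ b a c, (∑ s, ρ s b * (∑ t, d s a t * g t c))
      = ∑ s, ρ s b * (∑ t, d s c t * g t a) :=
    fun b a c => Finset.sum_congr rfl fun s _ => by rw [hC]
  -- S b a c = ∑ s, Mval b a s * g s c, where Mval b a c := ∑ s, ρ s b * d s a c
  have hSM : ∀ b a c, (∑ s, ρ s b * (∑ t, d s a t * g t c))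
      = ∑ s, (∑ w, ρ w b * d w a s) * g s c := by
    intro b a c
    calc (∑ s, ρ s b * (∑ t, d s a t * g t c))
        = ∑ s, ∑ t, (ρ s b * d s a t) * g t c := by
          refine Finset.sum_congr rfl fun s _ => ?_
          rw [Finset.mul_sum]; exact Finset.sum_congr rfl fun t _ => by ring
      _ = ∑ t, ∑ s, (ρ s b * d s a t) * g t c := Finset.sum_comm
      _ = ∑ s, (∑ w, ρ w b * d w a s) * g s c := by
          exact Finset.sum_congr rfl fun t _ => by rw [Finset.sum_mul]
  -- hD rearranged: RdR a b c - RdR a c b = Mval b a c - Mval c a b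
  have hD' : ∀ a b c, (∑ u, ρ a u * d b u c) - (∑ u, ρ a u * d c u b)
      = (∑ s, ρ s b * d s a c) - (∑ s, ρ s c * d s a b) := by
    intro a b c
    have h := hD a b c
    rw [show (fun s => ρ s b * d s a c - ρ s c * d s a b
        - ρ a s * d b s c + ρ a s * d c s b)
      = fun s => (ρ s b * d s a c - ρ s c * d s a b)
        - (ρ a s * d b s c - ρ a s * d c s b) from funext fun s => by ring] at h
    rw [Finset.sum_sub_distrib, Finset.sum_sub_distrib, Finset.sum_sub_distrib,
      ] at h
    linarith
  -- h2 : ∑ s, d t a s * P s w = ∑ s, g s a * RdR w t s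
  have h2 : ∀ t a w, (∑ s, d t a s * (∑ u, ρ s u * g u w))
      = ∑ s, g s a * (∑ u, ρ w u * d t u s) := by
    intro t a w
    calc (∑ s, d t a s * (∑ u, ρ s u * g u w))
        = ∑ s, d t a s * (∑ u, ρ w u * g u s) := by
          exact Finset.sum_congr rfl fun s _ => by rw [hB]
      _ = ∑ s, ∑ u, ρ w u * (d t a s * g s u) := by
          refine Finset.sum_congr rfl fun s _ => ?_
          rw [Finset.mul_sum]
          exact Finset.sum_congr rfl fun u _ => by rw [hg u s]; ring
      _ = ∑ u, ∑ s, ρ w u * (d t a s * g s u) := Finset.sum_comm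
      _ = ∑ u, ρ w u * (∑ s, d t u s * g s a) := by
          refine Finset.sum_congr rfl fun u _ => ?_
          rw [← Finset.mul_sum, hC]
      _ = ∑ u, ∑ s, (ρ w u * d t u s) * g s a := by
          refine Finset.sum_congr rfl fun u _ => ?_
          rw [Finset.mul_sum]
          exact Finset.sum_congr rfl fun s _ => by ring
      _ = ∑ s, ∑ u, (ρ w u * d t u s) * g s a := Finset.sum_comm
      _ = ∑ s, g s a * (∑ u, ρ w u * d t u s) := by
          refine Finset.sum_congr rfl fun s _ => ?_
          rw [← Finset.sum_mul, mul_comm]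
  -- main formula: F a b k = Φ a b k
  have hF : ∀ a b : Fin n,
      (∑ s, ((∑ t, (g a t * d t k s - g k t * d t a s)) + ∑ t, d s a t * g t k)
        * (∑ u, ρ s u * g u b))
      = (∑ t, g a t * (∑ s, ρ s t * (∑ w, d s b w * g w k)))
        - (∑ t, g t k * (∑ s, ρ s t * (∑ w, d s b w * g w a)))
        + (∑ t, g t b * (∑ s, ρ s t * (∑ w, d s k w * g w a))) := by
    intro a b
    have hsplit : (∑ s, ((∑ t, (g a t * d t k s - g k t * d t a s)) + ∑ t, d s a t * g t k)
          * (∑ u, ρ s u * g u b))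
        = (∑ s, (∑ t, g a t * d t k s) * (∑ u, ρ s u * g u b))
          - (∑ s, (∑ t, g k t * d t a s) * (∑ u, ρ s u * g u b))
          + (∑ s, (∑ t, d s a t * g t k) * (∑ u, ρ s u * g u b)) := by
      rw [← Finset.sum_sub_distrib, ← Finset.sum_add_distrib]
      refine Finset.sum_congr rfl fun s _ => ?_
      rw [Finset.sum_sub_distrib]
      ring
    -- F1 and F2 as double sums
    have hF1 : ∀ a' k', (∑ s, (∑ t, g a' t * d t k' s) * (∑ u, ρ s u * g u b))
        = ∑ t, ∑ s, g a' t * g s k' * (∑ u, ρ b u * d t u s) := by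
      intro a' k'
      calc (∑ s, (∑ t, g a' t * d t k' s) * (∑ u, ρ s u * g u b))
          = ∑ s, ∑ t, g a' t * (d t k' s * (∑ u, ρ s u * g u b)) := by
            refine Finset.sum_congr rfl fun s _ => ?_
            rw [Finset.sum_mul]
            exact Finset.sum_congr rfl fun t _ => by ring
        _ = ∑ t, ∑ s, g a' t * (d t k' s * (∑ u, ρ s u * g u b)) := Finset.sum_comm
        _ = ∑ t, g a' t * (∑ s, d t k' s * (∑ u, ρ s u * g u b)) := by
            refine Finset.sum_congr rfl fun t _ => ?_
            rw [Finset.mul_sum]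
        _ = ∑ t, g a' t * (∑ s, g s k' * (∑ u, ρ b u * d t u s)) := by
            refine Finset.sum_congr rfl fun t _ => ?_
            rw [h2 t k' b]
        _ = ∑ t, ∑ s, g a' t * g s k' * (∑ u, ρ b u * d t u s) := by
            refine Finset.sum_congr rfl fun t _ => ?_
            rw [Finset.mul_sum]
            exact Finset.sum_congr rfl fun s _ => by ring
    have hF12 : (∑ s, (∑ t, g a t * d t k s) * (∑ u, ρ s u * g u b))
          - (∑ s, (∑ t, g k t * d t a s) * (∑ u, ρ s u * g u b))
        = (∑ t, g a t * (∑ s, ρ s t * (∑ w, d s b w * g w k)))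
          - (∑ t, g t k * (∑ s, ρ s t * (∑ w, d s b w * g w a))) := by
      rw [hF1 a k, hF1 k a]
      have hswap : (∑ t, ∑ s, g k t * g s a * (∑ u, ρ b u * d t u s))
          = ∑ t, ∑ s, g k s * g t a * (∑ u, ρ b u * d s u t) := Finset.sum_comm
      rw [hswap, ← Finset.sum_sub_distrib]
      calc (∑ t, ((∑ s, g a t * g s k * (∑ u, ρ b u * d t u s))
              - ∑ s, g k s * g t a * (∑ u, ρ b u * d s u t)))
          = ∑ t, ∑ s, (g a t * g s k * (∑ u, ρ b u * d t u s)
              - g a t * g s k * (∑ u, ρ b u * d s u t)) := by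
            refine Finset.sum_congr rfl fun t _ => ?_
            rw [← Finset.sum_sub_distrib]
            refine Finset.sum_congr rfl fun s _ => ?_
            rw [hg k s, hg t a]
            ring
        _ = ∑ t, ∑ s, (g a t * ((∑ w, ρ w t * d w b s) * g s k)
              - g s k * ((∑ w, ρ w s * d w b t) * g t a)) := by
            refine Finset.sum_congr rfl fun t _ => Finset.sum_congr rfl fun s _ => ?_
            have h := hD' b t s
            have : (∑ u, ρ b u * d t u s) - (∑ u, ρ b u * d s u t)
                = (∑ w, ρ w t * d w b s) - (∑ w, ρ w s * d w b t) := h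
            rw [hg a t]
            linear_combination (g t a * g s k) * this
        _ = (∑ t, g a t * (∑ s, ρ s t * (∑ w, d s b w * g w k)))
            - (∑ t, g t k * (∑ s, ρ s t * (∑ w, d s b w * g w a))) := by
            simp only [Finset.sum_sub_distrib]
            congr 1
            · refine Finset.sum_congr rfl fun t _ => ?_
              rw [← Finset.mul_sum, ← hSM t b k]
            · rw [show (∑ t, ∑ s, g s k * ((∑ w, ρ w s * d w b t) * g t a))
                  = ∑ s, ∑ t, g s k * ((∑ w, ρ w s * d w b t) * g t a) from Finset.sum_comm]
              refine Finset.sum_congr rfl fun s _ => ?_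
              rw [← Finset.mul_sum, ← hSM s b a]
    have hF3 : (∑ s, (∑ t, d s a t * g t k) * (∑ u, ρ s u * g u b))
        = ∑ t, g t b * (∑ s, ρ s t * (∑ w, d s k w * g w a)) := by
      calc (∑ s, (∑ t, d s a t * g t k) * (∑ u, ρ s u * g u b))
          = ∑ s, (∑ t, d s k t * g t a) * (∑ u, ρ s u * g u b) :=
            Finset.sum_congr rfl fun s _ => by rw [hC]
        _ = ∑ s, ∑ u, g u b * (ρ s u * (∑ t, d s k t * g t a)) := by
            refine Finset.sum_congr rfl fun s _ => ?_
            rw [Finset.mul_sum]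
            exact Finset.sum_congr rfl fun u _ => by ring
        _ = ∑ u, ∑ s, g u b * (ρ s u * (∑ t, d s k t * g t a)) := Finset.sum_comm
        _ = ∑ u, g u b * (∑ s, ρ s u * (∑ t, d s k t * g t a)) :=
            Finset.sum_congr rfl fun u _ => (Finset.mul_sum _ _ _).symm
    rw [hsplit, hF12, hF3]
  rw [hF i j, hF j i]
  have e1 : (∑ t, g i t * (∑ s, ρ s t * (∑ w, d s j w * g w k)))
      = ∑ t, g t i * (∑ s, ρ s t * (∑ w, d s k w * g w j)) :=
    Finset.sum_congr rfl fun t _ => by rw [hg i t, hSsym t j k]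
  have e2 : (∑ t, g t k * (∑ s, ρ s t * (∑ w, d s j w * g w i)))
      = ∑ t, g t k * (∑ s, ρ s t * (∑ w, d s i w * g w j)) :=
    Finset.sum_congr rfl fun t _ => by rw [hSsym t j i]
  have e3 : (∑ t, g t j * (∑ s, ρ s t * (∑ w, d s k w * g w i)))
      = ∑ t, g j t * (∑ s, ρ s t * (∑ w, d s i w * g w k)) :=
    Finset.sum_congr rfl fun t _ => by rw [hg j t, hSsym t k i]
  rw [e1, e2, e3]
  ring


/-- Identity (I2): for `b̃` defined by
`2b̃^{ij}_k = Σ_s(g^{is}∂_s r^j_k − g^{js}∂_s r^i_k) + ∂_k g̃^{ij}`, if the Nijenhuis tensor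
of `r` vanishes on `U` then `Σ_s b̃^{ik}_s g̃^{sj} = Σ_s b̃^{jk}_s g̃^{si}` on `U`. -/
theorem identity_I2 {n : ℕ} (U : Set (Fin n → ℝ)) (hU : IsOpen U)
    (g : Matrix (Fin n) (Fin n) ℝ) (hgsym : g.IsSymm) (hginv : g.det ≠ 0)
    (r : Fin n → Fin n → (Fin n → ℝ) → ℝ)
    (hr : ∀ i j, ContDiffOn ℝ (⊤ : ℕ∞) (r i j) U)
    (g' : Fin n → Fin n → (Fin n → ℝ) → ℝ)
    (hg'def : ∀ i j, g' i j = fun x => ∑ s, r i s x * g s j)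
    (hg'sym : ∀ x ∈ U, ∀ i j, g' i j x = g' j i x)
    (b' : Fin n → Fin n → Fin n → (Fin n → ℝ) → ℝ)
    (hb'def : ∀ i j k : Fin n, ∀ x ∈ U,
      2 * b' i j k x =
        ∑ s, (g i s * pd s (r j k) x - g j s * pd s (r i k) x) + pd k (g' i j) x)
    (hNij : ∀ x ∈ U, ∀ i j k : Fin n,
      ∑ s, (r s j x * pd s (r i k) x - r s k x * pd s (r i j) x
        - r i s x * pd j (r s k) x + r i s x * pd k (r s j) x) = 0) :
    ∀ x ∈ U, ∀ i j k : Fin n,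
      ∑ s, b' i k s x * g' s j x = ∑ s, b' j k s x * g' s i x := by
  intro x hx i j k
  have hgsym' : ∀ a b, g a b = g b a := fun a b => (hgsym.apply a b).symm
  have hdiff : ∀ a b, DifferentiableAt ℝ (r a b) x := fun a b =>
    ((hr a b).differentiableOn (by simp)).differentiableAt (hU.mem_nhds hx)
  have hpdg' : ∀ t a b, pd t (g' a b) x = ∑ s, pd t (r a s) x * g s b := by
    intro t a b
    rw [hg'def]
    unfold pd
    rw [fderiv_fun_sum (fun s _ => ((hdiff a s).mul_const (g s b)))]
    rw [ContinuousLinearMap.sum_apply]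
    refine Finset.sum_congr rfl fun s _ => ?_
    rw [fderiv_mul_const (hdiff a s)]
    simp [mul_comm]
  have hpdsym : ∀ t a b, ∑ s, pd t (r a s) x * g s b = ∑ s, pd t (r b s) x * g s a := by
    intro t a b
    rw [← hpdg' t a b, ← hpdg' t b a]
    unfold pd
    congr 1
    apply Filter.EventuallyEq.fderiv_eq
    filter_upwards [hU.mem_nhds hx] with y hy
    exact hg'sym y hy a b
  have hB : ∀ a b, ∑ s, r a s x * g s b = ∑ s, r b s x * g s a := by
    intro a b
    have := hg'sym x hx a b
    simp only [hg'def] at this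
    exact this
  have hD : ∀ a b c, ∑ s, (r s b x * pd s (r a c) x - r s c x * pd s (r a b) x
      - r a s x * pd b (r s c) x + r a s x * pd c (r s b) x) = 0 := hNij x hx
  have twoLHS : ∀ (a b : Fin n), 2 * (∑ s, b' a k s x * g' s b x)
      = ∑ s, ((∑ t, (g a t * pd t (r k s) x - g k t * pd t (r a s) x))
          + ∑ t, pd s (r a t) x * g t k) * (∑ u, r s u x * g u b) := by
    intro a b
    rw [Finset.mul_sum]
    refine Finset.sum_congr rfl fun s _ => ?_
    rw [show 2 * (b' a k s x * g' s b x) = (2 * b' a k s x) * g' s b x from by ring,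
      hb'def a k s x hx, hpdg' s a k]
    simp only [hg'def]
  have hkey := key g hgsym' (fun a b => r a b x) (fun t a b => pd t (r a b) x)
    hB hpdsym hD i j k
  have hfin := (twoLHS i j).trans (hkey.trans (twoLHS j i).symm)
  linarith
end

section
/- Let U ⊆ ℝⁿ be open, let β_{ij} : U → ℝ (for i ≠ j) be smooth, and for each i let η_i be a smooth function depending only on the i-th coordinate R^i, with derivative η_i'. Suppose β satisfies on U: (F1): ∂_k β_{ij} = β_{ik} β_{kj} for pairwise distinct i,j,k; (F2): ∂_i β_{ij} + ∂_j β_{ji} + Σ_{k≠i,j} β_{ki} β_{kj} = 0 for i ≠ j; and (F3): η_i ∂_i β_{ij} + η_j ∂_j β_{ji} + (1/2)η_i' β_{ij} + (1/2)η_j' β_{ji} + Σ_{k≠i,j} η_k β_{ki} β_{kj} = 0 for i ≠ j. Then for every λ ∈ ℝ such that λ + η_k > 0 on U for all k, the functions β^λ_{ij} := β_{ij}·√((λ+η_i)/(λ+η_j)) satisfy (F1) and (F2) on U. -/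
open scoped BigOperators

lemma sqrt_ratio_deriv {n : ℕ} (lam : ℝ) (η : Fin n → ℝ → ℝ)
    (hη : ∀ m, ContDiff ℝ (⊤ : ℕ∞) (η m)) (i j : Fin n)
    (U : Set (Fin n → ℝ)) (hU : IsOpen U)
    (hpos : ∀ k : Fin n, ∀ x ∈ U, 0 < lam + η k (x k))
    (x : Fin n → ℝ) (hx : x ∈ U) :
    ∃ D : (Fin n → ℝ) →L[ℝ] ℝ,
      HasFDerivAt (fun y => Real.sqrt ((lam + η i (y i)) / (lam + η j (y j)))) D x ∧
      ∀ k : Fin n, D (Pi.single k 1) =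
        Real.sqrt ((lam + η i (x i)) / (lam + η j (x j))) *
          ((if k = i then deriv (η i) (x i) / (2 * (lam + η i (x i))) else 0)
            - (if k = j then deriv (η j) (x j) / (2 * (lam + η j (x j))) else 0)) := by
  have hai : 0 < lam + η i (x i) := hpos i x hx
  have haj : 0 < lam + η j (x j) := hpos j x hx
  have hsi : 0 < Real.sqrt (lam + η i (x i)) := Real.sqrt_pos.2 hai
  have hsj : 0 < Real.sqrt (lam + η j (x j)) := Real.sqrt_pos.2 haj
  -- derivative of t ↦ √(lam + η m t) at x m
  have hg : ∀ m : Fin n, HasDerivAt (fun t => Real.sqrt (lam + η m t))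
      (deriv (η m) (x m) / (2 * Real.sqrt (lam + η m (x m)))) (x m) := by
    intro m
    have h1 : HasDerivAt (fun t => lam + η m t) (deriv (η m) (x m)) (x m) :=
      ((((hη m).differentiable (by simp)) (x m)).hasDerivAt).const_add lam
    exact h1.sqrt (ne_of_gt (hpos m x hx))
  -- F_i : y ↦ √(lam + η i (y i))
  have hFi : HasFDerivAt (fun y : Fin n → ℝ => Real.sqrt (lam + η i (y i)))
      ((deriv (η i) (x i) / (2 * Real.sqrt (lam + η i (x i)))) •
        (ContinuousLinearMap.proj i : (Fin n → ℝ) →L[ℝ] ℝ)) x :=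
    by
    have hproj : HasFDerivAt (fun y : Fin n → ℝ => y i)
        (ContinuousLinearMap.proj i : (Fin n → ℝ) →L[ℝ] ℝ) x :=
      (ContinuousLinearMap.proj i : (Fin n → ℝ) →L[ℝ] ℝ).hasFDerivAt
    exact ((hg i).comp_hasFDerivAt x hproj :)
  have hHj : HasFDerivAt (fun y : Fin n → ℝ => (Real.sqrt (lam + η j (y j)))⁻¹)
      ((-(deriv (η j) (x j) / (2 * Real.sqrt (lam + η j (x j)))) /
          (Real.sqrt (lam + η j (x j))) ^ 2) •
        (ContinuousLinearMap.proj j : (Fin n → ℝ) →L[ℝ] ℝ)) x :=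
    by
    have hproj : HasFDerivAt (fun y : Fin n → ℝ => y j)
        (ContinuousLinearMap.proj j : (Fin n → ℝ) →L[ℝ] ℝ) x :=
      (ContinuousLinearMap.proj j : (Fin n → ℝ) →L[ℝ] ℝ).hasFDerivAt
    exact (((hg j).inv (ne_of_gt hsj)).comp_hasFDerivAt x hproj :)
  have hmul := hFi.mul hHj
  have heq : (fun y => Real.sqrt ((lam + η i (y i)) / (lam + η j (y j)))) =ᶠ[nhds x]
      (fun y => Real.sqrt (lam + η i (y i)) * (Real.sqrt (lam + η j (y j)))⁻¹) := by
    filter_upwards [hU.mem_nhds hx] with y hy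
    rw [Real.sqrt_div (le_of_lt (hpos i y hy)), div_eq_mul_inv]
  refine ⟨_, hmul.congr_of_eventuallyEq heq, ?_⟩
  intro k
  rw [Real.sqrt_div hai.le, div_eq_mul_inv]
  simp only [ContinuousLinearMap.add_apply, ContinuousLinearMap.smul_apply,
    ContinuousLinearMap.proj_apply, Pi.single_apply, smul_eq_mul]
  rw [Real.sq_sqrt haj.le]
  set Si := Real.sqrt (lam + η i (x i)) with hSid
  set Sj := Real.sqrt (lam + η j (x j)) with hSjd
  have hmi : Si * Si = lam + η i (x i) := Real.mul_self_sqrt hai.le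
  have hmj : Sj * Sj = lam + η j (x j) := Real.mul_self_sqrt haj.le
  rcases eq_or_ne i j with hij | hij
  · subst hij
    rw [← hmi]
    clear_value Si Sj
    by_cases hki : k = i
    · subst hki
      simp only [if_pos rfl]
      field_simp
      ring
    · have h1 : ¬ (i = k) := fun h => hki h.symm
      simp [h1]
  · rw [← hmi, ← hmj]
    clear_value Si Sj
    by_cases hki : k = i <;> by_cases hkj : k = j
    · exact absurd (hki.symm.trans hkj) hij
    · have hjk : ¬ (j = k) := fun h => hkj h.symm
      simp only [if_neg hjk, if_pos hki.symm, hki, if_pos rfl, if_neg hij, ↓reduceIte,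
        if_neg (Ne.symm hij), sub_zero, zero_add, mul_one]
      field_simp
      ring
    · have hik : ¬ (i = k) := fun h => hki h.symm
      simp only [if_pos hkj.symm, if_neg hik, hkj, if_pos rfl, if_neg hij, ↓reduceIte,
        if_neg (Ne.symm hij), zero_sub, add_zero, mul_one]
      field_simp
      ring
    · have hik : ¬ (i = k) := fun h => hki h.symm
      have hjk : ¬ (j = k) := fun h => hkj h.symm
      simp [hik, hjk, hki, hkj]

lemma pd_mul_sqrt_ratio {n : ℕ} (lam : ℝ) (η : Fin n → ℝ → ℝ)
    (hη : ∀ m, ContDiff ℝ (⊤ : ℕ∞) (η m)) (i j : Fin n)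
    (U : Set (Fin n → ℝ)) (hU : IsOpen U)
    (hpos : ∀ k : Fin n, ∀ x ∈ U, 0 < lam + η k (x k))
    (b : (Fin n → ℝ) → ℝ) (hb : ContDiffOn ℝ (⊤ : ℕ∞) b U)
    (x : Fin n → ℝ) (hx : x ∈ U) (k : Fin n) :
    pd k (fun y => b y * Real.sqrt ((lam + η i (y i)) / (lam + η j (y j)))) x =
      pd k b x * Real.sqrt ((lam + η i (x i)) / (lam + η j (x j))) +
      b x * (Real.sqrt ((lam + η i (x i)) / (lam + η j (x j))) *
        ((if k = i then deriv (η i) (x i) / (2 * (lam + η i (x i))) else 0)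
          - (if k = j then deriv (η j) (x j) / (2 * (lam + η j (x j))) else 0))) := by
  obtain ⟨D, hD, hDk⟩ := sqrt_ratio_deriv lam η hη i j U hU hpos x hx
  have hB : HasFDerivAt b (fderiv ℝ b x) x :=
    ((hb.contDiffAt (hU.mem_nhds hx)).differentiableAt (by simp)).hasFDerivAt
  have hm := hB.mul hD
  have h1 : pd k (fun y => b y * Real.sqrt ((lam + η i (y i)) / (lam + η j (y j)))) x =
      (b x • D + Real.sqrt ((lam + η i (x i)) / (lam + η j (x j))) • fderiv ℝ b x)
        (Pi.single k 1) := by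
    unfold pd
    exact congrArg (fun L => L (Pi.single k 1)) hm.fderiv
  rw [h1]
  simp only [ContinuousLinearMap.add_apply, ContinuousLinearMap.smul_apply, smul_eq_mul,
    hDk k, pd]
  ring

/-- If the rotation coefficients `β` satisfy (F1), (F2), (F3), then for every `λ` with
`λ + η_k > 0` on `U` the rotation coefficients `β^λ_{ij} = β_{ij}√((λ+η_i)/(λ+η_j))` of the
pencil metric again satisfy the flatness equations (F1) and (F2). -/
theorem pencil_rotation_coefficients_flat {n : ℕ} (U : Set (Fin n → ℝ)) (hU : IsOpen U)
    (β : Fin n → Fin n → (Fin n → ℝ) → ℝ)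
    (hβ : ∀ i j : Fin n, i ≠ j → ContDiffOn ℝ (⊤ : ℕ∞) (β i j) U)
    (η : Fin n → ℝ → ℝ)
    (hη : ∀ i, ContDiff ℝ (⊤ : ℕ∞) (η i))
    (hF1 : ∀ i j k : Fin n, i ≠ j → j ≠ k → i ≠ k → ∀ x ∈ U,
      pd k (β i j) x = β i k x * β k j x)
    (hF2 : ∀ i j : Fin n, i ≠ j → ∀ x ∈ U,
      pd i (β i j) x + pd j (β j i) x +
        ∑ k ∈ ({i, j}ᶜ : Finset (Fin n)), β k i x * β k j x = 0)
    (hF3 : ∀ i j : Fin n, i ≠ j → ∀ x ∈ U,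
      η i (x i) * pd i (β i j) x + η j (x j) * pd j (β j i) x +
        (1 / 2) * deriv (η i) (x i) * β i j x +
        (1 / 2) * deriv (η j) (x j) * β j i x +
        ∑ k ∈ ({i, j}ᶜ : Finset (Fin n)), η k (x k) * β k i x * β k j x = 0) :
    ∀ lam : ℝ, (∀ k : Fin n, ∀ x ∈ U, 0 < lam + η k (x k)) →
      (∀ i j k : Fin n, i ≠ j → j ≠ k → i ≠ k → ∀ x ∈ U,
        pd k (fun y => β i j y * Real.sqrt ((lam + η i (y i)) / (lam + η j (y j)))) x =
          (β i k x * Real.sqrt ((lam + η i (x i)) / (lam + η k (x k)))) *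
            (β k j x * Real.sqrt ((lam + η k (x k)) / (lam + η j (x j))))) ∧
      (∀ i j : Fin n, i ≠ j → ∀ x ∈ U,
        pd i (fun y => β i j y * Real.sqrt ((lam + η i (y i)) / (lam + η j (y j)))) x +
          pd j (fun y => β j i y * Real.sqrt ((lam + η j (y j)) / (lam + η i (y i)))) x +
          ∑ k ∈ ({i, j}ᶜ : Finset (Fin n)),
            (β k i x * Real.sqrt ((lam + η k (x k)) / (lam + η i (x i)))) *
              (β k j x * Real.sqrt ((lam + η k (x k)) / (lam + η j (x j)))) = 0) := by
  intro lam hlam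
  constructor
  · -- (F1) for the pencil
    intro i j k hij hjk hik x hx
    rw [pd_mul_sqrt_ratio lam η hη i j U hU hlam (β i j) (hβ i j hij) x hx k]
    have hki : ¬ (k = i) := fun h => hik h.symm
    have hkj : ¬ (k = j) := fun h => hjk h.symm
    rw [if_neg hki, if_neg hkj, sub_self, mul_zero, mul_zero, add_zero,
      hF1 i j k hij hjk hik x hx]
    have hai : 0 < lam + η i (x i) := hlam i x hx
    have haj : 0 < lam + η j (x j) := hlam j x hx
    have hak : 0 < lam + η k (x k) := hlam k x hx
    rw [Real.sqrt_div hai.le, Real.sqrt_div hai.le, Real.sqrt_div hak.le]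
    have hsk : Real.sqrt (lam + η k (x k)) ≠ 0 := (Real.sqrt_pos.2 hak).ne'
    field_simp
  · -- (F2) for the pencil
    intro i j hij x hx
    have hai : 0 < lam + η i (x i) := hlam i x hx
    have haj : 0 < lam + η j (x j) := hlam j x hx
    rw [pd_mul_sqrt_ratio lam η hη i j U hU hlam (β i j) (hβ i j hij) x hx i,
      pd_mul_sqrt_ratio lam η hη j i U hU hlam (β j i) (hβ j i hij.symm) x hx j]
    rw [if_pos rfl, if_pos rfl, if_neg hij, if_neg hij.symm, sub_zero, sub_zero]
    rw [Real.sqrt_div hai.le, Real.sqrt_div haj.le]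
    set Si := Real.sqrt (lam + η i (x i)) with hSid
    set Sj := Real.sqrt (lam + η j (x j)) with hSjd
    have hSi : 0 < Si := Real.sqrt_pos.2 hai
    have hSj : 0 < Sj := Real.sqrt_pos.2 haj
    have hmi : Si * Si = lam + η i (x i) := Real.mul_self_sqrt hai.le
    have hmj : Sj * Sj = lam + η j (x j) := Real.mul_self_sqrt haj.le
    -- rewrite the sum
    have hsum : ∑ k ∈ ({i, j}ᶜ : Finset (Fin n)),
        (β k i x * Real.sqrt ((lam + η k (x k)) / (lam + η i (x i)))) *
          (β k j x * Real.sqrt ((lam + η k (x k)) / (lam + η j (x j)))) =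
        (lam * ∑ k ∈ ({i, j}ᶜ : Finset (Fin n)), β k i x * β k j x +
          ∑ k ∈ ({i, j}ᶜ : Finset (Fin n)), η k (x k) * β k i x * β k j x) * (Si * Sj)⁻¹ := by
      rw [Finset.mul_sum, ← Finset.sum_add_distrib, Finset.sum_mul]
      refine Finset.sum_congr rfl ?_
      intro k _
      have hak : 0 < lam + η k (x k) := hlam k x hx
      have hmk : Real.sqrt (lam + η k (x k)) * Real.sqrt (lam + η k (x k)) =
          lam + η k (x k) := Real.mul_self_sqrt hak.le
      rw [Real.sqrt_div hak.le, Real.sqrt_div hak.le]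
      calc (β k i x * (Real.sqrt (lam + η k (x k)) / Si)) *
            (β k j x * (Real.sqrt (lam + η k (x k)) / Sj))
          = (β k i x * β k j x *
              (Real.sqrt (lam + η k (x k)) * Real.sqrt (lam + η k (x k)))) * (Si * Sj)⁻¹ := by
            field_simp
        _ = (lam * (β k i x * β k j x) + η k (x k) * β k i x * β k j x) * (Si * Sj)⁻¹ := by
            rw [hmk]; ring
    rw [hsum]
    -- use (F2) and (F3)
    have h2 := hF2 i j hij x hx
    have h3 := hF3 i j hij x hx
    have hA : ∑ k ∈ ({i, j}ᶜ : Finset (Fin n)), β k i x * β k j x =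
        -(pd i (β i j) x + pd j (β j i) x) := by linarith
    have hB : ∑ k ∈ ({i, j}ᶜ : Finset (Fin n)), η k (x k) * β k i x * β k j x =
        -(η i (x i) * pd i (β i j) x + η j (x j) * pd j (β j i) x +
          (1 / 2) * deriv (η i) (x i) * β i j x + (1 / 2) * deriv (η j) (x j) * β j i x) := by
      linarith
    rw [hA, hB]
    have hei : η i (x i) = Si * Si - lam := by rw [hmi]; ring
    have hej : η j (x j) = Sj * Sj - lam := by rw [hmj]; ring
    rw [← hmi, ← hmj, hei, hej]
    clear_value Si Sj
    field_simp
    ring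
end

section
/- Zero curvature of the Lax pair (L1). Let U ⊆ ℝⁿ be open, let β_{ij} : U → ℝ (for i ≠ j) be smooth, and for each i let η_i be a smooth function depending only on the i-th coordinate, with derivative η_i', such that η_i − η_j is nowhere zero on U for i ≠ j. Suppose β satisfies system (S) on U. Fix λ ∈ ℝ with λ + η_k nowhere zero on U for all k, and define matrices B_j(λ) : U → M_n(ℝ) by: (B_j)_{i,j} = β_{ij} for i ≠ j; (B_j)_{j,k} = −((λ+η_k)/(λ+η_j))·β_{kj} for k ≠ j; (B_j)_{j,j} = −η_j'/(2(λ+η_j)); and all other entries zero. Then for all i ≠ j the zero-curvature equation ∂_i B_j − ∂_j B_i = B_i B_j − B_j B_i holds on U. -/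
open scoped BigOperators

private lemma pd_const {n : ℕ} (k : Fin n) (c : ℝ) (x : Fin n → ℝ) : pd k (fun _ => c) x = 0 := by
  simp [pd]

private lemma pd_mul {n : ℕ} {f g : (Fin n → ℝ) → ℝ} {x : Fin n → ℝ} (k : Fin n)
    (hf : DifferentiableAt ℝ f x) (hg : DifferentiableAt ℝ g x) :
    pd k (fun y => f y * g y) x = pd k f x * g x + f x * pd k g x := by
  unfold pd
  rw [fderiv_fun_mul hf hg]
  simp [ContinuousLinearMap.add_apply, ContinuousLinearMap.smul_apply, smul_eq_mul]
  ring

private lemma pd_inv {n : ℕ} {g : (Fin n → ℝ) → ℝ} {x : Fin n → ℝ} (k : Fin n)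
    (hg : DifferentiableAt ℝ g x) (hne : g x ≠ 0) :
    pd k (fun y => (g y)⁻¹) x = -(pd k g x) / (g x)^2 := by
  have h : HasFDerivAt (fun y => (g y)⁻¹) ((-((g x)^2)⁻¹) • fderiv ℝ g x) x :=
    (hasDerivAt_inv hne).comp_hasFDerivAt x hg.hasFDerivAt
  unfold pd
  rw [h.fderiv]
  simp [ContinuousLinearMap.smul_apply, smul_eq_mul]
  ring

private lemma pd_div {n : ℕ} {f g : (Fin n → ℝ) → ℝ} {x : Fin n → ℝ} (k : Fin n)
    (hf : DifferentiableAt ℝ f x) (hg : DifferentiableAt ℝ g x) (hne : g x ≠ 0) :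
    pd k (fun y => f y / g y) x = (pd k f x * g x - f x * pd k g x) / (g x)^2 := by
  have h1 : pd k (fun y => f y * (g y)⁻¹) x
      = pd k f x * (g x)⁻¹ + f x * pd k (fun y => (g y)⁻¹) x :=
    pd_mul k hf (hg.inv hne)
  simp only [div_eq_mul_inv]
  rw [h1, pd_inv k hg hne]
  field_simp
  ring

private lemma pd_neg {n : ℕ} {f : (Fin n → ℝ) → ℝ} {x : Fin n → ℝ} (k : Fin n) :
    pd k (fun y => -(f y)) x = -(pd k f x) := by
  unfold pd
  rw [fderiv_fun_neg]
  simp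

private lemma pd_comp {n : ℕ} (k m : Fin n) (F : ℝ → ℝ) (x : Fin n → ℝ)
    (hF : DifferentiableAt ℝ F (x m)) :
    pd k (fun y => F (y m)) x = if m = k then deriv F (x m) else 0 := by
  have hproj : HasFDerivAt (fun y : Fin n → ℝ => y m)
      (ContinuousLinearMap.proj m : (Fin n → ℝ) →L[ℝ] ℝ) x :=
    (ContinuousLinearMap.proj m : (Fin n → ℝ) →L[ℝ] ℝ).hasFDerivAt
  have h : HasFDerivAt (fun y : Fin n → ℝ => F (y m))
      ((deriv F (x m)) • (ContinuousLinearMap.proj m : (Fin n → ℝ) →L[ℝ] ℝ)) x :=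
    (hF.hasDerivAt).comp_hasFDerivAt x hproj
  unfold pd
  rw [h.fderiv]
  simp [Pi.single_apply]

private lemma diffE {n : ℕ} (m : Fin n) (lam : ℝ) (η : Fin n → ℝ → ℝ) (x : Fin n → ℝ)
    (hη : Differentiable ℝ (η m)) :
    DifferentiableAt ℝ (fun y : Fin n → ℝ => lam + η m (y m)) x := by
  have h1 : DifferentiableAt ℝ (fun y : Fin n → ℝ => y m) x :=
    (ContinuousLinearMap.proj m : (Fin n → ℝ) →L[ℝ] ℝ).differentiableAt
  exact (differentiableAt_const lam).add ((hη (x m)).comp x h1)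

private lemma pdE {n : ℕ} (k m : Fin n) (lam : ℝ) (η : Fin n → ℝ → ℝ) (x : Fin n → ℝ)
    (hη : Differentiable ℝ (η m)) :
    pd k (fun y : Fin n → ℝ => lam + η m (y m)) x
      = if m = k then deriv (η m) (x m) else 0 := by
  rw [pd_comp k m (fun t => lam + η m t) x ((differentiableAt_const lam).add (hη (x m)))]
  simp [deriv_const_add]

private lemma pd_row {n : ℕ} (k m c : Fin n) (lam : ℝ) (η : Fin n → ℝ → ℝ)
    (g : (Fin n → ℝ) → ℝ) (x : Fin n → ℝ)
    (hηc : Differentiable ℝ (η c)) (hηm : Differentiable ℝ (η m))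
    (hg : DifferentiableAt ℝ g x) (hm : lam + η m (x m) ≠ 0) :
    pd k (fun y => -((lam + η c (y c)) / (lam + η m (y m))) * g y) x =
      -((((if c = k then deriv (η c) (x c) else 0) * (lam + η m (x m))
          - (lam + η c (x c)) * (if m = k then deriv (η m) (x m) else 0))
          / (lam + η m (x m))^2) * g x)
      + -((lam + η c (x c)) / (lam + η m (x m))) * pd k g x := by
  have hEc := diffE c lam η x hηc
  have hEm := diffE m lam η x hηm
  have hq : DifferentiableAt ℝ (fun y : Fin n → ℝ => (lam + η c (y c)) / (lam + η m (y m))) x := by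
    simp only [div_eq_mul_inv]
    exact hEc.mul ((differentiableAt_inv hm).comp x hEm)
  rw [pd_mul k (f := fun y => -((lam + η c (y c)) / (lam + η m (y m)))) hq.neg hg, pd_neg k, pd_div k hEc hEm hm, pdE k m lam η x hηm,
    pdE k c lam η x hηc]
  ring

private lemma pd_diag {n : ℕ} (k m : Fin n) (lam : ℝ) (η : Fin n → ℝ → ℝ) (x : Fin n → ℝ)
    (hη : ContDiff ℝ (⊤ : ℕ∞) (η m)) (hm : lam + η m (x m) ≠ 0) (hkm : m ≠ k) :
    pd k (fun y => -(deriv (η m) (y m)) / (2 * (lam + η m (y m)))) x = 0 := by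
  have h1 : ContDiff ℝ ((⊤ : ℕ∞) : WithTop ℕ∞) (η m) := hη.of_le (by simp)
  have hd : Differentiable ℝ (deriv (η m)) :=
    ((contDiff_infty_iff_deriv.mp h1).2).differentiable (by simp)
  have hF : DifferentiableAt ℝ (fun t => -(deriv (η m) t) / (2 * (lam + η m t))) (x m) := by
    apply DifferentiableAt.div
    · exact (hd (x m)).neg
    · exact (differentiableAt_const 2).mul
        ((differentiableAt_const lam).add ((hη.differentiable (by simp)) (x m)))
    · exact mul_ne_zero two_ne_zero hm
  rw [pd_comp k m (fun t => -(deriv (η m) t) / (2 * (lam + η m t))) x hF]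
  simp [hkm]

set_option maxHeartbeats 1600000 in
/-- Zero curvature of the Lax pair (L1): if `β` satisfies system (S), then the matrices
`B_j(λ)` encoding the linear system (L1) satisfy the zero-curvature equations
`∂_i B_j − ∂_j B_i = [B_i, B_j]`. -/
theorem lax_pair_L1_zero_curvature {n : ℕ} (U : Set (Fin n → ℝ)) (hU : IsOpen U)
    (β : Fin n → Fin n → (Fin n → ℝ) → ℝ)
    (hβ : ∀ i j : Fin n, i ≠ j → ContDiffOn ℝ (⊤ : ℕ∞) (β i j) U)
    (η : Fin n → ℝ → ℝ)
    (hη : ∀ i, ContDiff ℝ (⊤ : ℕ∞) (η i))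
    (hηne : ∀ i j : Fin n, i ≠ j → ∀ x ∈ U, η i (x i) - η j (x j) ≠ 0)
    (hS1 : ∀ i j k : Fin n, i ≠ j → j ≠ k → i ≠ k → ∀ x ∈ U,
      pd k (β i j) x = β i k x * β k j x)
    (hS2 : ∀ i j : Fin n, i ≠ j → ∀ x ∈ U,
      pd i (β i j) x =
        (1 / 2) * (deriv (η i) (x i) / (η j (x j) - η i (x i))) * β i j x +
        (1 / 2) * (deriv (η j) (x j) / (η j (x j) - η i (x i))) * β j i x +
        ∑ k ∈ ({i, j}ᶜ : Finset (Fin n)),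
          ((η k (x k) - η j (x j)) / (η j (x j) - η i (x i))) * β k i x * β k j x)
    (lam : ℝ) (hlam : ∀ k : Fin n, ∀ x ∈ U, lam + η k (x k) ≠ 0)
    (B : Fin n → Fin n → Fin n → (Fin n → ℝ) → ℝ)
    (hB : ∀ j a c : Fin n, ∀ x : Fin n → ℝ,
      B j a c x =
        if a = j then
          (if c = j then -(deriv (η j) (x j)) / (2 * (lam + η j (x j)))
           else -((lam + η c (x c)) / (lam + η j (x j))) * β c j x)
        else
          (if c = j then β a j x else 0)) :
    ∀ i j : Fin n, i ≠ j → ∀ x ∈ U, ∀ a c : Fin n,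
      pd i (B j a c) x - pd j (B i a c) x =
        ∑ s, (B i a s x * B j s c x - B j a s x * B i s c x) := by
  intro i j hij x hx a c
  have hji : j ≠ i := hij.symm
  have hei : lam + η i (x i) ≠ 0 := hlam i x hx
  have hej : lam + η j (x j) ≠ 0 := hlam j x hx
  have hdji : η j (x j) - η i (x i) ≠ 0 := hηne j i hji x hx
  have hdij : η i (x i) - η j (x j) ≠ 0 := hηne i j hij x hx
  have hβd : ∀ p q : Fin n, p ≠ q → DifferentiableAt ℝ (β p q) x := fun p q h =>
    ((hβ p q h).differentiableOn (by simp)).differentiableAt (hU.mem_nhds hx)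
  have hηdiff : ∀ m : Fin n, Differentiable ℝ (η m) := fun m => (hη m).differentiable (by simp)
  have hsplit : ∀ f : Fin n → ℝ,
      ∑ s, f s = f i + f j + ∑ s ∈ ({i, j}ᶜ : Finset (Fin n)), f s := by
    intro f
    rw [← Finset.sum_compl_add_sum ({i, j} : Finset (Fin n)) f, Finset.sum_pair hij]
    ring
  have hmem : ∀ s : Fin n, s ∈ ({i, j}ᶜ : Finset (Fin n)) → s ≠ i ∧ s ≠ j := by
    intro s hs
    simp only [Finset.mem_compl, Finset.mem_insert, Finset.mem_singleton, not_or] at hs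
    exact hs
  have hBcol : ∀ m a c : Fin n, a ≠ m → c = m → B m a c = β a m := by
    intro m a c ham hcm
    funext y
    rw [hB]
    simp [ham, hcm]
  have hBzero : ∀ m a c : Fin n, a ≠ m → c ≠ m → B m a c = fun _ => (0 : ℝ) := by
    intro m a c ham hcm
    funext y
    rw [hB]
    simp [ham, hcm]
  have hBrow : ∀ m c : Fin n, c ≠ m →
      B m m c = fun y => -((lam + η c (y c)) / (lam + η m (y m))) * β c m y := by
    intro m c hcm
    funext y
    rw [hB]
    simp [hcm]
  have hBdiag : ∀ m : Fin n,
      B m m m = fun y => -(deriv (η m) (y m)) / (2 * (lam + η m (y m))) := by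
    intro m
    funext y
    rw [hB]
    simp
  by_cases hai : a = i
  · by_cases hci : c = i
    · -- Case F : a = i, c = i
      rw [hai, hci, hBzero j i i hij hij, pd_const, hBdiag i,
        pd_diag j i lam η x (hη i) hei hij, hsplit]
      have hcompl : ∑ s ∈ ({i, j}ᶜ : Finset (Fin n)),
          (B i i s x * B j s i x - B j i s x * B i s i x)
          = ∑ _s ∈ ({i, j}ᶜ : Finset (Fin n)), (0:ℝ) := by
        refine Finset.sum_congr rfl fun s hs => ?_
        obtain ⟨hsi, hsj⟩ := hmem s hs
        simp [hB, hsi, hsj, hij, hji]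
      rw [hcompl]
      simp [hB, hij, hji]
      field_simp
      ring
    · by_cases hcj : c = j
      · -- Case D : a = i, c = j
        rw [hai, hcj, hBcol j i j hij rfl, hBrow i j hji,
          pd_row j i j lam η (β j i) x (hηdiff j) (hηdiff i) (hβd j i hji) hei,
          hS2 i j hij x hx, hS2 j i hji x hx, Finset.pair_comm j i, hsplit]
        have hcompl : ∑ s ∈ ({i, j}ᶜ : Finset (Fin n)),
            (B i i s x * B j s j x - B j i s x * B i s j x)
            = ∑ s ∈ ({i, j}ᶜ : Finset (Fin n)),
              ((η s (x s) - η j (x j)) / (η j (x j) - η i (x i)) * β s i x * β s j x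
               + (lam + η j (x j)) / (lam + η i (x i))
                  * ((η s (x s) - η i (x i)) / (η i (x i) - η j (x j)) * β s j x * β s i x)) := by
          refine Finset.sum_congr rfl fun s hs => ?_
          obtain ⟨hsi, hsj⟩ := hmem s hs
          simp [hB, hsi, hsj, hij, hji]
          field_simp
          ring
        rw [hcompl, Finset.sum_add_distrib, ← Finset.mul_sum]
        simp [hB, hij, hji]
        field_simp
        ring
      · -- Case H : a = i, c ∉ {i, j}
        rw [hai, hBzero j i c hij hcj, pd_const, hBrow i c hci,
          pd_row j i c lam η (β c i) x (hηdiff c) (hηdiff i) (hβd c i hci) hei,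
          hS1 c i j hci hij hcj x hx, hsplit]
        have hcompl : ∑ s ∈ ({i, j}ᶜ : Finset (Fin n)),
            (B i i s x * B j s c x - B j i s x * B i s c x)
            = ∑ _s ∈ ({i, j}ᶜ : Finset (Fin n)), (0:ℝ) := by
          refine Finset.sum_congr rfl fun s hs => ?_
          obtain ⟨hsi, hsj⟩ := hmem s hs
          simp [hB, hsi, hsj, hij, hji, hci, hcj]
        rw [hcompl]
        simp [hB, hij, hji, hci, hcj]
        field_simp
  · by_cases haj : a = j
    · by_cases hci : c = i
      · -- Case E : a = j, c = i
        rw [haj, hci, hBrow j i hij,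
          pd_row i j i lam η (β i j) x (hηdiff i) (hηdiff j) (hβd i j hij) hej,
          hBcol i j i hji rfl,
          hS2 i j hij x hx, hS2 j i hji x hx, Finset.pair_comm j i, hsplit]
        have hcompl : ∑ s ∈ ({i, j}ᶜ : Finset (Fin n)),
            (B i j s x * B j s i x - B j j s x * B i s i x)
            = ∑ s ∈ ({i, j}ᶜ : Finset (Fin n)),
              (-((lam + η i (x i)) / (lam + η j (x j))
                  * ((η s (x s) - η j (x j)) / (η j (x j) - η i (x i)) * β s i x * β s j x))
               - (η s (x s) - η i (x i)) / (η i (x i) - η j (x j)) * β s j x * β s i x) := by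
          refine Finset.sum_congr rfl fun s hs => ?_
          obtain ⟨hsi, hsj⟩ := hmem s hs
          simp [hB, hsi, hsj, hij, hji]
          field_simp
          ring
        rw [hcompl, Finset.sum_sub_distrib, Finset.sum_neg_distrib, ← Finset.mul_sum]
        simp [hB, hij, hji]
        field_simp
        ring
      · by_cases hcj : c = j
        · -- Case G : a = j, c = j
          rw [haj, hcj, hBdiag j, pd_diag i j lam η x (hη j) hej hji,
            hBzero i j j hji hji, pd_const, hsplit]
          have hcompl : ∑ s ∈ ({i, j}ᶜ : Finset (Fin n)),
              (B i j s x * B j s j x - B j j s x * B i s j x)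
              = ∑ _s ∈ ({i, j}ᶜ : Finset (Fin n)), (0:ℝ) := by
            refine Finset.sum_congr rfl fun s hs => ?_
            obtain ⟨hsi, hsj⟩ := hmem s hs
            simp [hB, hsi, hsj, hij, hji]
          rw [hcompl]
          simp [hB, hij, hji]
          field_simp
          ring
        · -- Case I : a = j, c ∉ {i, j}
          rw [haj, hBrow j c hcj,
            pd_row i j c lam η (β c j) x (hηdiff c) (hηdiff j) (hβd c j hcj) hej,
            hS1 c j i hcj hji hci x hx,
            hBzero i j c hji hci, pd_const, hsplit]
          have hcompl : ∑ s ∈ ({i, j}ᶜ : Finset (Fin n)),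
              (B i j s x * B j s c x - B j j s x * B i s c x)
              = ∑ _s ∈ ({i, j}ᶜ : Finset (Fin n)), (0:ℝ) := by
            refine Finset.sum_congr rfl fun s hs => ?_
            obtain ⟨hsi, hsj⟩ := hmem s hs
            simp [hB, hsi, hsj, hij, hji, hci, hcj]
          rw [hcompl]
          simp [hB, hij, hji, hci, hcj]
          field_simp
    · by_cases hci : c = i
      · -- Case C : a ∉ {i,j}, c = i
        rw [hci, hBzero j a i haj hij, pd_const, hBcol i a i hai rfl,
          hS1 a i j hai hij haj x hx, hsplit]
        have hcompl : ∑ s ∈ ({i, j}ᶜ : Finset (Fin n)),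
            (B i a s x * B j s i x - B j a s x * B i s i x)
            = ∑ _s ∈ ({i, j}ᶜ : Finset (Fin n)), (0:ℝ) := by
          refine Finset.sum_congr rfl fun s hs => ?_
          obtain ⟨hsi, hsj⟩ := hmem s hs
          simp [hB, hsi, hsj, hai, haj, hij, hji]
        rw [hcompl]
        simp [hB, hai, haj, hij, hji]
      · by_cases hcj : c = j
        · -- Case B : a ∉ {i,j}, c = j
          rw [hcj, hBcol j a j haj rfl, hS1 a j i haj hji hai x hx,
            hBzero i a j hai hji, pd_const, hsplit]
          have hcompl : ∑ s ∈ ({i, j}ᶜ : Finset (Fin n)),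
              (B i a s x * B j s j x - B j a s x * B i s j x)
              = ∑ _s ∈ ({i, j}ᶜ : Finset (Fin n)), (0:ℝ) := by
            refine Finset.sum_congr rfl fun s hs => ?_
            obtain ⟨hsi, hsj⟩ := hmem s hs
            simp [hB, hsi, hsj, hai, haj, hij, hji]
          rw [hcompl]
          simp [hB, hai, haj, hij, hji]
        · -- Case A : a ∉ {i,j}, c ∉ {i,j}
          rw [hBzero j a c haj hcj, pd_const, hBzero i a c hai hci, pd_const, hsplit]
          have hcompl : ∑ s ∈ ({i, j}ᶜ : Finset (Fin n)),
              (B i a s x * B j s c x - B j a s x * B i s c x)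
              = ∑ _s ∈ ({i, j}ᶜ : Finset (Fin n)), (0:ℝ) := by
            refine Finset.sum_congr rfl fun s hs => ?_
            obtain ⟨hsi, hsj⟩ := hmem s hs
            simp [hB, hsi, hsj, hai, haj, hci, hcj, hij, hji]
          rw [hcompl]
          simp [hB, hai, haj, hci, hcj, hij, hji]
end

section
/- Closedness of the displacement form of the deformed orthogonal system. Let U ⊆ ℝⁿ be open, let β_{ij} : U → ℝ (for i ≠ j) and H_i : U → ℝ be smooth with ∂_i H_j = β_{ij} H_i for all i ≠ j, for each i let η_i be a smooth function depending only on the i-th coordinate, and fix λ ∈ ℝ with λ + η_k > 0 on U for all k. Let φ_1,…,φ_n : U → ℝⁿ be smooth maps satisfying the frame equations ∂_j φ_i = √((λ+η_i)/(λ+η_j))·β_{ij}·φ_j for all i ≠ j. Then for all i ≠ j: ∂_j((H_i/√(λ+η_i))·φ_i) = ∂_i((H_j/√(λ+η_j))·φ_j) on U; consequently the ℝⁿ-valued 1-form Σ_i (H_i/√(λ+η_i))·φ_i·dR^i is closed. -/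
open scoped BigOperators

/-- Partial derivative of an `ℝⁿ`-valued function on `ℝⁿ` in the `k`-th coordinate
direction. -/
noncomputable def pdV {n : ℕ} (k : Fin n) (f : (Fin n → ℝ) → (Fin n → ℝ)) :
    (Fin n → ℝ) → (Fin n → ℝ) :=
  fun x => fderiv ℝ f x (Pi.single k 1)

/-- Closedness of the displacement form of the deformed orthogonal coordinate system:
the mixed derivatives `∂_j((H_i/√(λ+η_i))φ_i)` and `∂_i((H_j/√(λ+η_j))φ_j)` coincide, i.e.
the `ℝⁿ`-valued 1-form `Σ_i (H_i/√(λ+η_i))·φ_i·dR^i` is closed. -/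
theorem displacement_form_closed {n : ℕ} (U : Set (Fin n → ℝ)) (hU : IsOpen U)
    (β : Fin n → Fin n → (Fin n → ℝ) → ℝ)
    (hβ : ∀ i j : Fin n, i ≠ j → ContDiffOn ℝ (⊤ : ℕ∞) (β i j) U)
    (H : Fin n → (Fin n → ℝ) → ℝ)
    (hH : ∀ i, ContDiffOn ℝ (⊤ : ℕ∞) (H i) U)
    (hHrot : ∀ i j : Fin n, i ≠ j → ∀ x ∈ U, pd i (H j) x = β i j x * H i x)
    (η : Fin n → ℝ → ℝ)
    (hη : ∀ i, ContDiff ℝ (⊤ : ℕ∞) (η i))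
    (lam : ℝ) (hlam : ∀ k : Fin n, ∀ x ∈ U, 0 < lam + η k (x k))
    (φ : Fin n → (Fin n → ℝ) → (Fin n → ℝ))
    (hφ : ∀ i, ContDiffOn ℝ (⊤ : ℕ∞) (φ i) U)
    (hframe : ∀ i j : Fin n, i ≠ j → ∀ x ∈ U,
      pdV j (φ i) x =
        (Real.sqrt ((lam + η i (x i)) / (lam + η j (x j))) * β i j x) • φ j x) :
    ∀ i j : Fin n, i ≠ j → ∀ x ∈ U,
      pdV j (fun y => (H i y / Real.sqrt (lam + η i (y i))) • φ i y) x =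
        pdV i (fun y => (H j y / Real.sqrt (lam + η j (y j))) • φ j y) x := by
  intro i j hij x hx
  have hxU : U ∈ nhds x := hU.mem_nhds hx
  have hpos : ∀ k : Fin n, 0 < lam + η k (x k) := fun k => hlam k x hx
  have hsqpos : ∀ k : Fin n, 0 < Real.sqrt (lam + η k (x k)) := fun k =>
    Real.sqrt_pos.mpr (hpos k)
  have key : ∀ a b : Fin n, a ≠ b →
      pdV b (fun y => (H a y / Real.sqrt (lam + η a (y a))) • φ a y) x =
        (β b a x * H b x / Real.sqrt (lam + η a (x a))) • φ a x +
        (H a x * β a b x / Real.sqrt (lam + η b (x b))) • φ b x := by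
    intro a b hab
    have hs0 : Real.sqrt (lam + η a (x a)) ≠ 0 := (hsqpos a).ne'
    have hdH : HasFDerivAt (H a) (fderiv ℝ (H a) x) x :=
      (((hH a).differentiableOn (by simp)).differentiableAt hxU).hasFDerivAt
    have hdφ : HasFDerivAt (φ a) (fderiv ℝ (φ a) x) x :=
      (((hφ a).differentiableOn (by simp)).differentiableAt hxU).hasFDerivAt
    -- one-dimensional derivative of t ↦ (√(lam + η a t))⁻¹
    have h1 : HasDerivAt (fun t : ℝ => lam + η a t) (deriv (η a) (x a)) (x a) :=
      HasDerivAt.const_add lam (((hη a).differentiable (by simp) (x a)).hasDerivAt)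
    have h2 : HasDerivAt (fun t : ℝ => Real.sqrt (lam + η a t))
        ((1 / (2 * Real.sqrt (lam + η a (x a)))) * deriv (η a) (x a)) (x a) :=
      (Real.hasDerivAt_sqrt (hpos a).ne').comp (x a) h1
    set v' : ℝ := -((1 / (2 * Real.sqrt (lam + η a (x a)))) * deriv (η a) (x a)) /
        Real.sqrt (lam + η a (x a)) ^ 2 with hv'
    have h3 : HasDerivAt (fun t : ℝ => (Real.sqrt (lam + η a t))⁻¹) v' (x a) :=
      h2.inv hs0
    have hproj : HasFDerivAt (fun y : Fin n → ℝ => y a)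
        (ContinuousLinearMap.proj a : (Fin n → ℝ) →L[ℝ] ℝ) x := by
      exact (ContinuousLinearMap.proj (R := ℝ) (φ := fun _ : Fin n => ℝ) a).hasFDerivAt
    have hv : HasFDerivAt (fun y : Fin n → ℝ => (Real.sqrt (lam + η a (y a)))⁻¹)
        (v' • (ContinuousLinearMap.proj a : (Fin n → ℝ) →L[ℝ] ℝ)) x :=
      h3.comp_hasFDerivAt (h₂ := fun t : ℝ => (Real.sqrt (lam + η a t))⁻¹)
        (f := fun y : Fin n → ℝ => y a) x hproj
    have hmul := hdH.mul hv
    have hsmul := hmul.smul hdφ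
    have hfun : (fun y => (H a y / Real.sqrt (lam + η a (y a))) • φ a y) =
        (fun y => (H a y * (Real.sqrt (lam + η a (y a)))⁻¹) • φ a y) := by
      funext y; rw [div_eq_mul_inv]
    have hfd := hsmul.fderiv
    have happ : pdV b (fun y => (H a y / Real.sqrt (lam + η a (y a))) • φ a y) x =
        (H a x * (Real.sqrt (lam + η a (x a)))⁻¹) • fderiv ℝ (φ a) x (Pi.single b 1) +
        (H a x * (v' * (Pi.single b 1 : Fin n → ℝ) a) +
          (Real.sqrt (lam + η a (x a)))⁻¹ * fderiv ℝ (H a) x (Pi.single b 1)) • φ a x := by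
      show fderiv ℝ _ x (Pi.single b 1) = _
      rw [hfun, show (fun y => (H a y * (Real.sqrt (lam + η a (y a)))⁻¹) • φ a y) =
          ((H a * fun y => (Real.sqrt (lam + η a (y a)))⁻¹) • φ a) from rfl, hfd]
      simp [ContinuousLinearMap.smulRight_apply, ContinuousLinearMap.proj_apply,
        mul_comm]
    have hsingle : (Pi.single b 1 : Fin n → ℝ) a = 0 := Pi.single_eq_of_ne hab 1
    have hφder : fderiv ℝ (φ a) x (Pi.single b 1) =
        (Real.sqrt ((lam + η a (x a)) / (lam + η b (x b))) * β a b x) • φ b x :=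
      hframe a b hab x hx
    have hHder : fderiv ℝ (H a) x (Pi.single b 1) = β b a x * H b x :=
      hHrot b a hab.symm x hx
    rw [happ, hsingle, hφder, hHder, smul_smul]
    have hsqrtdiv : Real.sqrt ((lam + η a (x a)) / (lam + η b (x b))) =
        Real.sqrt (lam + η a (x a)) / Real.sqrt (lam + η b (x b)) :=
      Real.sqrt_div (hpos a).le _
    rw [hsqrtdiv, add_comm]
    congr 1
    · congr 1
      field_simp
      simp
    · congr 1
      field_simp
  rw [key i j hij, key j i hij.symm, add_comm,
    mul_comm (H i x) (β i j x), mul_comm (β j i x) (H j x)]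
end

section
/- Rescaled Weingarten equations of a coordinate hypersurface. Let U ⊆ ℝⁿ be open, let β_{ij} : U → ℝ (for i ≠ j) be smooth, let H_i : U → ℝ be smooth and nowhere zero, for each i let η_i be a smooth function depending only on the i-th coordinate, and fix λ ∈ ℝ with λ + η_k > 0 on U for all k. Let φ_1,…,φ_n : U → ℝⁿ be smooth maps satisfying the frame equations ∂_j φ_i = √((λ+η_i)/(λ+η_j))·β_{ij}·φ_j for all i ≠ j, and let r⃗ : U → ℝⁿ be smooth with ∂_i r⃗ = (H_i/√(λ+η_i))·φ_i for all i. Then for every i ≠ n the Weingarten equation holds on U: ∂_i φ_n = (β_{ni}/H_i)·√(λ+η_n)·∂_i r⃗; i.e. the i-th principal curvature of the coordinate hypersurface is k^i = (β_{ni}/H_i)·√(λ+η_n), namely √(λ+η_n) times a quantity independent of λ. -/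
open scoped BigOperators

/-- Rescaled Weingarten equations of a coordinate hypersurface: for the deformed
orthogonal system with radius vector `r⃗` and unit normal `φ_n` of the coordinate
hypersurface of the last coordinate, `∂_i φ_n = (β_{ni}/H_i)·√(λ+η_n)·∂_i r⃗`; i.e.
the principal curvatures are `√(λ+η_n)` times quantities independent of `λ`. -/
theorem rescaled_weingarten_equations {n : ℕ} (U : Set (Fin (n + 1) → ℝ)) (hU : IsOpen U)
    (β : Fin (n + 1) → Fin (n + 1) → (Fin (n + 1) → ℝ) → ℝ)
    (hβ : ∀ i j : Fin (n + 1), i ≠ j → ContDiffOn ℝ (⊤ : ℕ∞) (β i j) U)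
    (H : Fin (n + 1) → (Fin (n + 1) → ℝ) → ℝ)
    (hH : ∀ i, ContDiffOn ℝ (⊤ : ℕ∞) (H i) U)
    (hHne : ∀ i : Fin (n + 1), ∀ x ∈ U, H i x ≠ 0)
    (η : Fin (n + 1) → ℝ → ℝ)
    (hη : ∀ i, ContDiff ℝ (⊤ : ℕ∞) (η i))
    (lam : ℝ) (hlam : ∀ k : Fin (n + 1), ∀ x ∈ U, 0 < lam + η k (x k))
    (φ : Fin (n + 1) → (Fin (n + 1) → ℝ) → (Fin (n + 1) → ℝ))
    (hφ : ∀ i, ContDiffOn ℝ (⊤ : ℕ∞) (φ i) U)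
    (hframe : ∀ i j : Fin (n + 1), i ≠ j → ∀ x ∈ U,
      pdV j (φ i) x =
        (Real.sqrt ((lam + η i (x i)) / (lam + η j (x j))) * β i j x) • φ j x)
    (rvec : (Fin (n + 1) → ℝ) → (Fin (n + 1) → ℝ))
    (hrvec : ContDiffOn ℝ (⊤ : ℕ∞) rvec U)
    (hradius : ∀ i : Fin (n + 1), ∀ x ∈ U,
      pdV i rvec x = (H i x / Real.sqrt (lam + η i (x i))) • φ i x) :
    ∀ i : Fin (n + 1), i ≠ Fin.last n → ∀ x ∈ U,
      pdV i (φ (Fin.last n)) x =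
        ((β (Fin.last n) i x / H i x) *
            Real.sqrt (lam + η (Fin.last n) (x (Fin.last n)))) • pdV i rvec x := by
  intro i hi x hx
  rw [hframe (Fin.last n) i (Ne.symm hi) x hx, hradius i x hx, smul_smul]
  congr 1
  have h1 := hlam (Fin.last n) x hx
  have h2 := hlam i x hx
  have hs2 : Real.sqrt (lam + η i (x i)) ≠ 0 := by positivity
  rw [Real.sqrt_div h1.le]
  field_simp [hHne i x hx]
end

section
/- First integrals of system (S1). Let U ⊆ ℝⁿ be open, let c_1,…,c_n be pairwise distinct real constants, and let β_{ij} : U → ℝ (for i ≠ j) be smooth functions satisfying system (S1) on U: ∂_k β_{ij} = β_{ik} β_{kj} for pairwise distinct i,j,k, and ∂_i β_{ij} = Σ_{k≠i,j}((c_k−c_j)/(c_j−c_i))·β_{ki}β_{kj} for i ≠ j. Define P_i := Σ_{k≠i}(c_k−c_i)·β_{ki}². Then ∂_j P_i = 0 on U for all j ≠ i; i.e. each P_i is a function of the i-th coordinate alone. -/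
open scoped BigOperators

/-- First integrals of system (S1): the quantities `P_i = Σ_{k≠i}(c_k−c_i)β_{ki}²`
satisfy `∂_j P_i = 0` for all `j ≠ i`, i.e. each `P_i` depends on the `i`-th coordinate
alone. -/
theorem first_integrals_S1 {n : ℕ} (U : Set (Fin n → ℝ)) (hU : IsOpen U)
    (c : Fin n → ℝ) (hc : ∀ i j : Fin n, i ≠ j → c i ≠ c j)
    (β : Fin n → Fin n → (Fin n → ℝ) → ℝ)
    (hβ : ∀ i j : Fin n, i ≠ j → ContDiffOn ℝ (⊤ : ℕ∞) (β i j) U)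
    (hS1a : ∀ i j k : Fin n, i ≠ j → j ≠ k → i ≠ k → ∀ x ∈ U,
      pd k (β i j) x = β i k x * β k j x)
    (hS1b : ∀ i j : Fin n, i ≠ j → ∀ x ∈ U,
      pd i (β i j) x =
        ∑ k ∈ ({i, j}ᶜ : Finset (Fin n)),
          ((c k - c j) / (c j - c i)) * β k i x * β k j x) :
    ∀ i j : Fin n, j ≠ i → ∀ x ∈ U,
      pd j (fun y => ∑ k ∈ ({i}ᶜ : Finset (Fin n)), (c k - c i) * (β k i y) ^ 2) x = 0 := by
  intro i j hji x hx
  have hij : i ≠ j := fun h => hji h.symm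
  have hmem : U ∈ nhds x := hU.mem_nhds hx
  have hd : ∀ k : Fin n, k ≠ i → DifferentiableAt ℝ (β k i) x := fun k hk =>
    ((hβ k i hk).differentiableOn (by simp)).differentiableAt hmem
  have hsum : HasFDerivAt
      (fun y => ∑ k ∈ ({i}ᶜ : Finset (Fin n)), (c k - c i) * (β k i y) ^ 2)
      (∑ k ∈ ({i}ᶜ : Finset (Fin n)),
        (c k - c i) • (β k i x • fderiv ℝ (β k i) x + β k i x • fderiv ℝ (β k i) x)) x := by
    apply HasFDerivAt.fun_sum
    intro k hk
    have hk' : k ≠ i := by simpa using hk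
    have := (((hd k hk').hasFDerivAt).mul ((hd k hk').hasFDerivAt)).const_mul (c k - c i)
    simpa [pow_two] using this
  have hpd : pd j (fun y => ∑ k ∈ ({i}ᶜ : Finset (Fin n)), (c k - c i) * (β k i y) ^ 2) x
      = ∑ k ∈ ({i}ᶜ : Finset (Fin n)), (c k - c i) * (2 * β k i x * pd j (β k i) x) := by
    simp only [pd, hsum.fderiv, ContinuousLinearMap.sum_apply, ContinuousLinearMap.smul_apply,
      smul_eq_mul, ContinuousLinearMap.add_apply]
    exact Finset.sum_congr rfl fun k _ => by ring
  rw [hpd]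
  have hjmem : j ∈ ({i}ᶜ : Finset (Fin n)) := by simpa using hji
  rw [← Finset.add_sum_erase _ _ hjmem]
  have hset : ({i}ᶜ : Finset (Fin n)).erase j = ({j, i}ᶜ : Finset (Fin n)) := by
    ext m; simp [not_or, and_comm]
  rw [hset]
  have h1 : ∑ k ∈ ({j, i}ᶜ : Finset (Fin n)), (c k - c i) * (2 * β k i x * pd j (β k i) x)
      = ∑ k ∈ ({j, i}ᶜ : Finset (Fin n)),
        (c k - c i) * (2 * β k i x * (β k j x * β j i x)) := by
    apply Finset.sum_congr rfl
    intro k hk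
    have hk' : ¬(k = j ∨ k = i) := by simpa using hk
    push_neg at hk'
    rw [hS1a k i j hk'.2 hij hk'.1 x hx]
  rw [h1, hS1b j i hji x hx, Finset.mul_sum, Finset.mul_sum, ← Finset.sum_add_distrib]
  apply Finset.sum_eq_zero
  intro m hm
  have hm' : ¬(m = j ∨ m = i) := by simpa using hm
  push_neg at hm'
  have hne : c i - c j ≠ 0 := sub_ne_zero.2 (hc i j hij)
  field_simp
  ring
end

section
/- Reparametrization symmetry of system (S1). Let c_1,…,c_n be pairwise distinct real constants and let β_{ij} : V → ℝ (for i ≠ j) be smooth functions on an open set V ⊆ ℝⁿ satisfying system (S1): ∂_k β_{ij} = β_{ik} β_{kj} for pairwise distinct i,j,k, and ∂_i β_{ij} = Σ_{k≠i,j}((c_k−c_j)/(c_j−c_i))·β_{ki}β_{kj} for i ≠ j. Let s_1,…,s_n : ℝ → ℝ be smooth functions and U ⊆ ℝⁿ an open set such that the map s(R) := (s_1(R^1),…,s_n(R^n)) sends U into V. Then the functions β̂_{ij}(R) := β_{ij}(s(R))·s_j'(R^j) again satisfy system (S1) on U. -/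
open scoped BigOperators

/-- Reparametrization symmetry of system (S1): if `β` satisfies (S1) on `V`, then for
smooth reparametrizations `R^i → s_i(R^i)` the functions
`β̂_{ij}(R) = β_{ij}(s(R))·s_j'(R^j)` again satisfy (S1) on `U`. -/
theorem reparametrization_symmetry_S1 {n : ℕ}
    (V : Set (Fin n → ℝ)) (hV : IsOpen V)
    (c : Fin n → ℝ) (hc : ∀ i j : Fin n, i ≠ j → c i ≠ c j)
    (β : Fin n → Fin n → (Fin n → ℝ) → ℝ)
    (hβ : ∀ i j : Fin n, i ≠ j → ContDiffOn ℝ (⊤ : ℕ∞) (β i j) V)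
    (hS1a : ∀ i j k : Fin n, i ≠ j → j ≠ k → i ≠ k → ∀ x ∈ V,
      pd k (β i j) x = β i k x * β k j x)
    (hS1b : ∀ i j : Fin n, i ≠ j → ∀ x ∈ V,
      pd i (β i j) x =
        ∑ k ∈ ({i, j}ᶜ : Finset (Fin n)),
          ((c k - c j) / (c j - c i)) * β k i x * β k j x)
    (s : Fin n → ℝ → ℝ) (hs : ∀ i, ContDiff ℝ (⊤ : ℕ∞) (s i))
    (U : Set (Fin n → ℝ)) (hU : IsOpen U)
    (hmap : ∀ x ∈ U, (fun i => s i (x i)) ∈ V) :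
    (∀ i j k : Fin n, i ≠ j → j ≠ k → i ≠ k → ∀ x ∈ U,
      pd k (fun y => β i j (fun m => s m (y m)) * deriv (s j) (y j)) x =
        (β i k (fun m => s m (x m)) * deriv (s k) (x k)) *
          (β k j (fun m => s m (x m)) * deriv (s j) (x j))) ∧
    (∀ i j : Fin n, i ≠ j → ∀ x ∈ U,
      pd i (fun y => β i j (fun m => s m (y m)) * deriv (s j) (y j)) x =
        ∑ k ∈ ({i, j}ᶜ : Finset (Fin n)),
          ((c k - c j) / (c j - c i)) *
            (β k i (fun m => s m (x m)) * deriv (s i) (x i)) *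
            (β k j (fun m => s m (x m)) * deriv (s j) (x j))) := by
  have hsd : ∀ m, Differentiable ℝ (deriv (s m)) := fun m =>
    ((contDiff_infty_iff_deriv.mp ((hs m).of_le (by simp))).2).differentiable (by simp)
  have key : ∀ i j k : Fin n, i ≠ j → k ≠ j → ∀ x ∈ U,
      pd k (fun y => β i j (fun m => s m (y m)) * deriv (s j) (y j)) x =
        deriv (s k) (x k) * pd k (β i j) (fun m => s m (x m)) * deriv (s j) (x j) := by
    intro i j k hij hkj x hx
    have hSxV : (fun m => s m (x m)) ∈ V := hmap x hx
    -- derivative of the reparametrization map S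
    have hS : HasFDerivAt (fun y : Fin n → ℝ => fun m => s m (y m))
        (ContinuousLinearMap.pi (fun m => deriv (s m) (x m) •
          (ContinuousLinearMap.proj m : (Fin n → ℝ) →L[ℝ] ℝ))) x := by
      apply hasFDerivAt_pi.mpr
      intro m
      exact (((hs m).differentiable (by simp) (x m)).hasDerivAt).comp_hasFDerivAt x
        (hasFDerivAt_apply _ _)
    -- derivative of β i j at S x
    have hβd : HasFDerivAt (β i j) (fderiv ℝ (β i j) (fun m => s m (x m)))
        (fun m => s m (x m)) := by
      have := ((hβ i j hij).contDiffAt (hV.mem_nhds hSxV)).differentiableAt (by simp)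
      exact this.hasFDerivAt
    have hcomp : HasFDerivAt (fun y : Fin n → ℝ => β i j (fun m => s m (y m)))
        ((fderiv ℝ (β i j) (fun m => s m (x m))).comp
          (ContinuousLinearMap.pi (fun m => deriv (s m) (x m) •
            (ContinuousLinearMap.proj m : (Fin n → ℝ) →L[ℝ] ℝ)))) x :=
      hβd.comp x hS
    -- derivative of y ↦ deriv (s j) (y j)
    have hg : HasFDerivAt (fun y : Fin n → ℝ => deriv (s j) (y j))
        (deriv (deriv (s j)) (x j) •
          (ContinuousLinearMap.proj j : (Fin n → ℝ) →L[ℝ] ℝ)) x :=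
      by have := ((hsd j (x j)).hasDerivAt).comp_hasFDerivAt x
           ((ContinuousLinearMap.proj j : (Fin n → ℝ) →L[ℝ] ℝ).hasFDerivAt); exact this
    have hprod := hcomp.mul hg
    have hfd := hprod.fderiv
    have : pd k (fun y => β i j (fun m => s m (y m)) * deriv (s j) (y j)) x =
        (β i j (fun m => s m (x m)) •
          (deriv (deriv (s j)) (x j) •
            (ContinuousLinearMap.proj j : (Fin n → ℝ) →L[ℝ] ℝ)) +
         deriv (s j) (x j) •
          ((fderiv ℝ (β i j) (fun m => s m (x m))).comp
            (ContinuousLinearMap.pi (fun m => deriv (s m) (x m) •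
              (ContinuousLinearMap.proj m : (Fin n → ℝ) →L[ℝ] ℝ))))) (Pi.single k 1) := by
      rw [pd]; exact congrArg (fun L => L (Pi.single k 1)) hfd
    rw [this]
    have hL : (ContinuousLinearMap.pi (fun m => deriv (s m) (x m) •
          (ContinuousLinearMap.proj m : (Fin n → ℝ) →L[ℝ] ℝ))) (Pi.single k 1) =
        deriv (s k) (x k) • (Pi.single k 1 : Fin n → ℝ) := by
      funext m
      by_cases hm : m = k
      · subst hm; simp
      · simp [Pi.single_apply, hm]
    simp only [ContinuousLinearMap.add_apply, ContinuousLinearMap.smul_apply,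
      ContinuousLinearMap.coe_comp', Function.comp_apply, hL,
      ContinuousLinearMap.proj_apply, map_smul]
    rw [Pi.single_apply]
    rw [if_neg (Ne.symm hkj)]
    simp only [smul_eq_mul, pd]
    ring
  refine ⟨?_, ?_⟩
  · intro i j k hij hjk hik x hx
    rw [key i j k hij (Ne.symm hjk) x hx, hS1a i j k hij hjk hik _ (hmap x hx)]
    ring
  · intro i j hij x hx
    rw [key i j i hij hij x hx, hS1b i j hij _ (hmap x hx), Finset.mul_sum, Finset.sum_mul]
    apply Finset.sum_congr rfl
    intro k _
    ring
end

section
/- Trigonometric reduction of system (S1) for n = 3. Let c_1 < c_2 < c_3 be real constants and let p, q, r : U → ℝ be smooth functions on an open set U ⊆ ℝ³. Define β_{21} = sin p/√(c_2−c_1), β_{31} = cos p/√(c_3−c_1), β_{12} = sinh q/√(c_2−c_1), β_{32} = cosh q/√(c_3−c_2), β_{13} = sin r/√(c_3−c_1), β_{23} = cos r/√(c_3−c_2). Then: (a) identically on U, P_1 := (c_2−c_1)β_{21}² + (c_3−c_1)β_{31}² = 1, P_2 := (c_1−c_2)β_{12}² + (c_3−c_2)β_{32}² = 1, and P_3 :=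 (c_1−c_3)β_{13}² + (c_2−c_3)β_{23}² = −1; (b) if p, q, r satisfy on U the system ∂_1 q = μ_1 cos p, ∂_1 r = −μ_1 sin p, ∂_2 p = −μ_2 cosh q, ∂_2 r = μ_2 sinh q, ∂_3 p = μ_3 cos r, ∂_3 q = μ_3 sin r, where μ_1 = √((c_3−c_2)/((c_2−c_1)(c_3−c_1))), μ_2 = √((c_3−c_1)/((c_2−c_1)(c_3−c_2))), μ_3 = √((c_2−c_1)/((c_3−c_1)(c_3−c_2))), then the functions β_{ij} satisfy system (S1) with n = 3 on U. -/
open scoped BigOperators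

lemma pd_comp_div {n : ℕ} (k : Fin n) (f : (Fin n → ℝ) → ℝ) {g : ℝ → ℝ} {g' : ℝ} (a : ℝ)
    (x : Fin n → ℝ) (hf : DifferentiableAt ℝ f x) (hg : HasDerivAt g g' (f x)) :
    pd k (fun y => g (f y) / a) x = g' * pd k f x / a := by
  have h1 : HasFDerivAt (g ∘ f) (g' • fderiv ℝ f x) x :=
    hg.comp_hasFDerivAt x hf.hasFDerivAt
  have h2 : HasFDerivAt (fun y => g (f y) / a) (a⁻¹ • (g' • fderiv ℝ f x)) x := by
    have := h1.const_smul a⁻¹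
    exact this.congr_of_eventuallyEq (Filter.Eventually.of_forall fun y => by simp [div_eq_inv_mul])
  simp only [pd, h2.fderiv, ContinuousLinearMap.smul_apply, smul_eq_mul]
  ring

/-- Trigonometric reduction of system (S1) for `n = 3` (indices `0,1,2` correspond to
`1,2,3`): (a) the first integrals take the values `P_1 = P_2 = 1`, `P_3 = −1`; (b) if
`p, q, r` satisfy the first-order system with the constants `μ_1, μ_2, μ_3`, then the
rotation coefficients `β_{ij}` satisfy system (S1). -/
theorem trigonometric_reduction_S1 (U : Set (Fin 3 → ℝ)) (hU : IsOpen U)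
    (c : Fin 3 → ℝ) (hc01 : c 0 < c 1) (hc12 : c 1 < c 2)
    (p q r : (Fin 3 → ℝ) → ℝ)
    (hp : ContDiffOn ℝ (⊤ : ℕ∞) p U) (hq : ContDiffOn ℝ (⊤ : ℕ∞) q U) (hr : ContDiffOn ℝ (⊤ : ℕ∞) r U)
    (β : Fin 3 → Fin 3 → (Fin 3 → ℝ) → ℝ)
    (hβ21 : ∀ x, β 1 0 x = Real.sin (p x) / Real.sqrt (c 1 - c 0))
    (hβ31 : ∀ x, β 2 0 x = Real.cos (p x) / Real.sqrt (c 2 - c 0))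
    (hβ12 : ∀ x, β 0 1 x = Real.sinh (q x) / Real.sqrt (c 1 - c 0))
    (hβ32 : ∀ x, β 2 1 x = Real.cosh (q x) / Real.sqrt (c 2 - c 1))
    (hβ13 : ∀ x, β 0 2 x = Real.sin (r x) / Real.sqrt (c 2 - c 0))
    (hβ23 : ∀ x, β 1 2 x = Real.cos (r x) / Real.sqrt (c 2 - c 1)) :
    (∀ x ∈ U,
      (c 1 - c 0) * (β 1 0 x) ^ 2 + (c 2 - c 0) * (β 2 0 x) ^ 2 = 1 ∧
      (c 0 - c 1) * (β 0 1 x) ^ 2 + (c 2 - c 1) * (β 2 1 x) ^ 2 = 1 ∧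
      (c 0 - c 2) * (β 0 2 x) ^ 2 + (c 1 - c 2) * (β 1 2 x) ^ 2 = -1) ∧
    ((∀ x ∈ U,
        pd 0 q x = Real.sqrt ((c 2 - c 1) / ((c 1 - c 0) * (c 2 - c 0))) * Real.cos (p x) ∧
        pd 0 r x = -(Real.sqrt ((c 2 - c 1) / ((c 1 - c 0) * (c 2 - c 0))) * Real.sin (p x)) ∧
        pd 1 p x = -(Real.sqrt ((c 2 - c 0) / ((c 1 - c 0) * (c 2 - c 1))) * Real.cosh (q x)) ∧
        pd 1 r x = Real.sqrt ((c 2 - c 0) / ((c 1 - c 0) * (c 2 - c 1))) * Real.sinh (q x) ∧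
        pd 2 p x = Real.sqrt ((c 1 - c 0) / ((c 2 - c 0) * (c 2 - c 1))) * Real.cos (r x) ∧
        pd 2 q x = Real.sqrt ((c 1 - c 0) / ((c 2 - c 0) * (c 2 - c 1))) * Real.sin (r x)) →
      ((∀ i j k : Fin 3, i ≠ j → j ≠ k → i ≠ k → ∀ x ∈ U,
          pd k (β i j) x = β i k x * β k j x) ∧
       (∀ i j : Fin 3, i ≠ j → ∀ x ∈ U,
          pd i (β i j) x =
            ∑ k ∈ ({i, j}ᶜ : Finset (Fin 3)),
              ((c k - c j) / (c j - c i)) * β k i x * β k j x))) := by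
  have h01 : (0:ℝ) < c 1 - c 0 := by linarith
  have h12 : (0:ℝ) < c 2 - c 1 := by linarith
  have h02 : (0:ℝ) < c 2 - c 0 := by linarith
  set A := Real.sqrt (c 1 - c 0) with hAdef
  set B := Real.sqrt (c 2 - c 1) with hBdef
  set D := Real.sqrt (c 2 - c 0) with hDdef
  have hA : 0 < Real.sqrt (c 1 - c 0) := Real.sqrt_pos.mpr h01
  have hB : 0 < Real.sqrt (c 2 - c 1) := Real.sqrt_pos.mpr h12
  have hD : 0 < Real.sqrt (c 2 - c 0) := Real.sqrt_pos.mpr h02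
  have sA : Real.sqrt (c 1 - c 0) ^ 2 = c 1 - c 0 := Real.sq_sqrt h01.le
  have sB : Real.sqrt (c 2 - c 1) ^ 2 = c 2 - c 1 := Real.sq_sqrt h12.le
  have sD : Real.sqrt (c 2 - c 0) ^ 2 = c 2 - c 0 := Real.sq_sqrt h02.le
  constructor
  · -- part (a)
    intro x hx
    refine ⟨?_, ?_, ?_⟩
    · rw [hβ21, hβ31, div_pow, div_pow, sA, sD]
      have h1 : (c 1 - c 0) * (Real.sin (p x) ^ 2 / (c 1 - c 0)) = Real.sin (p x) ^ 2 := by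
        field_simp
      have h2 : (c 2 - c 0) * (Real.cos (p x) ^ 2 / (c 2 - c 0)) = Real.cos (p x) ^ 2 := by
        field_simp
      rw [h1, h2]; exact Real.sin_sq_add_cos_sq (p x)
    · rw [hβ12, hβ32, div_pow, div_pow, sA, sB]
      have h1 : (c 0 - c 1) * (Real.sinh (q x) ^ 2 / (c 1 - c 0)) = -Real.sinh (q x) ^ 2 := by
        field_simp; ring
      have h2 : (c 2 - c 1) * (Real.cosh (q x) ^ 2 / (c 2 - c 1)) = Real.cosh (q x) ^ 2 := by
        field_simp
      rw [h1, h2]; linear_combination Real.cosh_sq_sub_sinh_sq (q x)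
    · rw [hβ13, hβ23, div_pow, div_pow, sD, sB]
      have h1 : (c 0 - c 2) * (Real.sin (r x) ^ 2 / (c 2 - c 0)) = -Real.sin (r x) ^ 2 := by
        field_simp; ring
      have h2 : (c 1 - c 2) * (Real.cos (r x) ^ 2 / (c 2 - c 1)) = -Real.cos (r x) ^ 2 := by
        field_simp; ring
      rw [h1, h2]; linear_combination -Real.sin_sq_add_cos_sq (r x)
  · -- part (b)
    intro hs
    have hμ1 : Real.sqrt ((c 2 - c 1) / ((c 1 - c 0) * (c 2 - c 0)))
        = Real.sqrt (c 2 - c 1) / (Real.sqrt (c 1 - c 0) * Real.sqrt (c 2 - c 0)) := by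
      rw [Real.sqrt_div h12.le, Real.sqrt_mul h01.le]
    have hμ2 : Real.sqrt ((c 2 - c 0) / ((c 1 - c 0) * (c 2 - c 1)))
        = Real.sqrt (c 2 - c 0) / (Real.sqrt (c 1 - c 0) * Real.sqrt (c 2 - c 1)) := by
      rw [Real.sqrt_div h02.le, Real.sqrt_mul h01.le]
    have hμ3 : Real.sqrt ((c 1 - c 0) / ((c 2 - c 0) * (c 2 - c 1)))
        = Real.sqrt (c 1 - c 0) / (Real.sqrt (c 2 - c 0) * Real.sqrt (c 2 - c 1)) := by
      rw [Real.sqrt_div h01.le, Real.sqrt_mul h02.le]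
    have hdp : ∀ x ∈ U, DifferentiableAt ℝ p x := fun x hx =>
      (hp.contDiffAt (hU.mem_nhds hx)).differentiableAt (by simp)
    have hdq : ∀ x ∈ U, DifferentiableAt ℝ q x := fun x hx =>
      (hq.contDiffAt (hU.mem_nhds hx)).differentiableAt (by simp)
    have hdr : ∀ x ∈ U, DifferentiableAt ℝ r x := fun x hx =>
      (hr.contDiffAt (hU.mem_nhds hx)).differentiableAt (by simp)
    have pdβ10 : ∀ (k : Fin 3), ∀ x ∈ U,
        pd k (β 1 0) x = Real.cos (p x) * pd k p x / Real.sqrt (c 1 - c 0) := by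
      intro k x hx
      rw [funext hβ21, pd_comp_div k p _ x (hdp x hx) (Real.hasDerivAt_sin (p x))]
    have pdβ20 : ∀ (k : Fin 3), ∀ x ∈ U,
        pd k (β 2 0) x = -Real.sin (p x) * pd k p x / Real.sqrt (c 2 - c 0) := by
      intro k x hx
      rw [funext hβ31, pd_comp_div k p _ x (hdp x hx) (Real.hasDerivAt_cos (p x))]
    have pdβ01 : ∀ (k : Fin 3), ∀ x ∈ U,
        pd k (β 0 1) x = Real.cosh (q x) * pd k q x / Real.sqrt (c 1 - c 0) := by
      intro k x hx
      rw [funext hβ12, pd_comp_div k q _ x (hdq x hx) (Real.hasDerivAt_sinh (q x))]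
    have pdβ21 : ∀ (k : Fin 3), ∀ x ∈ U,
        pd k (β 2 1) x = Real.sinh (q x) * pd k q x / Real.sqrt (c 2 - c 1) := by
      intro k x hx
      rw [funext hβ32, pd_comp_div k q _ x (hdq x hx) (Real.hasDerivAt_cosh (q x))]
    have pdβ02 : ∀ (k : Fin 3), ∀ x ∈ U,
        pd k (β 0 2) x = Real.cos (r x) * pd k r x / Real.sqrt (c 2 - c 0) := by
      intro k x hx
      rw [funext hβ13, pd_comp_div k r _ x (hdr x hx) (Real.hasDerivAt_sin (r x))]
    have pdβ12 : ∀ (k : Fin 3), ∀ x ∈ U,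
        pd k (β 1 2) x = -Real.sin (r x) * pd k r x / Real.sqrt (c 2 - c 1) := by
      intro k x hx
      rw [funext hβ23, pd_comp_div k r _ x (hdr x hx) (Real.hasDerivAt_cos (r x))]
    constructor
    · -- first family of equations
      intro i j k hij hjk hik x hx
      have hq0 := (hs x hx).1
      have hr0 := (hs x hx).2.1
      have hp1 := (hs x hx).2.2.1
      have hr1 := (hs x hx).2.2.2.1
      have hp2 := (hs x hx).2.2.2.2.1
      have hq2 := (hs x hx).2.2.2.2.2
      have hfin : ∀ m : Fin 3, m = 0 ∨ m = 1 ∨ m = 2 := by decide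
      rcases hfin i with rfl | rfl | rfl <;> rcases hfin j with rfl | rfl | rfl <;>
        rcases hfin k with rfl | rfl | rfl
      all_goals first
        | exact absurd rfl hij
        | exact absurd rfl hjk
        | exact absurd rfl hik
        | skip
      · rw [pdβ01 2 x hx, hq2, hβ13, hβ32, hμ3]; simp only [hAdef, hBdef, hDdef]; field_simp
      · rw [pdβ02 1 x hx, hr1, hβ12, hβ23, hμ2]; simp only [hAdef, hBdef, hDdef]; field_simp
      · rw [pdβ10 2 x hx, hp2, hβ23, hβ31, hμ3]; simp only [hAdef, hBdef, hDdef]; field_simp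
      · rw [pdβ12 0 x hx, hr0, hβ21, hβ13, hμ1]; simp only [hAdef, hBdef, hDdef]; field_simp
      · rw [pdβ20 1 x hx, hp1, hβ32, hβ21, hμ2]; simp only [hAdef, hBdef, hDdef]; field_simp
      · rw [pdβ21 0 x hx, hq0, hβ31, hβ12, hμ1]; simp only [hAdef, hBdef, hDdef]; field_simp
    · -- second family of equations
      intro i j hij x hx
      have hq0 := (hs x hx).1
      have hr0 := (hs x hx).2.1
      have hp1 := (hs x hx).2.2.1
      have hr1 := (hs x hx).2.2.2.1
      have hp2 := (hs x hx).2.2.2.2.1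
      have hq2 := (hs x hx).2.2.2.2.2
      have hc00 : ({0, 1}ᶜ : Finset (Fin 3)) = {2} := by decide
      have hc01' : ({0, 2}ᶜ : Finset (Fin 3)) = {1} := by decide
      have hc10 : ({1, 0}ᶜ : Finset (Fin 3)) = {2} := by decide
      have hc12' : ({1, 2}ᶜ : Finset (Fin 3)) = {0} := by decide
      have hc20 : ({2, 0}ᶜ : Finset (Fin 3)) = {1} := by decide
      have hc21' : ({2, 1}ᶜ : Finset (Fin 3)) = {0} := by decide
      have hfin : ∀ m : Fin 3, m = 0 ∨ m = 1 ∨ m = 2 := by decide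
      rcases hfin i with rfl | rfl | rfl <;> rcases hfin j with rfl | rfl | rfl
      all_goals first
        | exact absurd rfl hij
        | skip
      · rw [hc00, Finset.sum_singleton, pdβ01 0 x hx, hq0, hβ31, hβ32, hμ1]
        rw [show c 2 - c 1 = B ^ 2 from sB.symm,
            show c 1 - c 0 = A ^ 2 from sA.symm]
        simp only [hAdef, hBdef, hDdef, Real.sqrt_sq hA.le, Real.sqrt_sq hB.le, Real.sqrt_sq hD.le]
        field_simp
      · rw [hc01', Finset.sum_singleton, pdβ02 0 x hx, hr0, hβ21, hβ23, hμ1]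
        rw [show c 1 - c 2 = -B ^ 2 by rw [sB]; ring,
            show c 2 - c 0 = D ^ 2 from sD.symm]
        simp only [hAdef, hBdef, hDdef, Real.sqrt_sq hA.le, Real.sqrt_sq hB.le, Real.sqrt_sq hD.le]
        field_simp
      · rw [hc10, Finset.sum_singleton, pdβ10 1 x hx, hp1, hβ32, hβ31, hμ2]
        rw [show c 2 - c 0 = D ^ 2 from sD.symm,
            show c 0 - c 1 = -A ^ 2 by rw [sA]; ring]
        simp only [hAdef, hBdef, hDdef, Real.sqrt_sq hA.le, Real.sqrt_sq hB.le, Real.sqrt_sq hD.le]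
        field_simp
      · rw [hc12', Finset.sum_singleton, pdβ12 1 x hx, hr1, hβ12, hβ13, hμ2]
        rw [show c 0 - c 2 = -D ^ 2 by rw [sD]; ring,
            show c 2 - c 1 = B ^ 2 from sB.symm]
        simp only [hAdef, hBdef, hDdef, Real.sqrt_sq hA.le, Real.sqrt_sq hB.le, Real.sqrt_sq hD.le]
        field_simp
      · rw [hc20, Finset.sum_singleton, pdβ20 2 x hx, hp2, hβ23, hβ21, hμ3]
        rw [show c 1 - c 0 = A ^ 2 from sA.symm,
            show c 0 - c 2 = -D ^ 2 by rw [sD]; ring]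
        simp only [hAdef, hBdef, hDdef, Real.sqrt_sq hA.le, Real.sqrt_sq hB.le, Real.sqrt_sq hD.le]
        field_simp
      · rw [hc21', Finset.sum_singleton, pdβ21 2 x hx, hq2, hβ13, hβ12, hμ3]
        rw [show c 0 - c 1 = -A ^ 2 by rw [sA]; ring,
            show c 1 - c 2 = -B ^ 2 by rw [sB]; ring]
        simp only [hAdef, hBdef, hDdef, Real.sqrt_sq hA.le, Real.sqrt_sq hB.le, Real.sqrt_sq hD.le]
        field_simp
end

section
/- Reduction of system (S2) to a triple of Monge–Ampère equations. Let U ⊆ ℝ³ be open and let p, q, r : U → ℝ be smooth functions satisfying on U the system (S2): ∂_1 q = cos p, ∂_1 r = −sin p, ∂_2 p = −cosh q, ∂_2 r = sinh q, ∂_3 p = cos r, ∂_3 q = sin r. Assume in addition sin p ≥ 0 and cos r ≥ 0 on U. Then q satisfies on U the three Monge–Ampère equations: ∂_1∂_2 q = cosh q·√(1−(∂_1 q)²), ∂_1∂_3 q = −√(1−(∂_1 q)²)·√(1−(∂_3 q)²), and ∂_2∂_3 q = sinh q·√(1−(∂_3 q)²). -/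
open scoped BigOperators

lemma pd_congr_nhds {n : ℕ} {f g : (Fin n → ℝ) → ℝ} {x : Fin n → ℝ}
    (h : f =ᶠ[nhds x] g) (k : Fin n) : pd k f x = pd k g x := by
  unfold pd; rw [h.fderiv_eq]

lemma pd_sin {n : ℕ} {f : (Fin n → ℝ) → ℝ} {x : Fin n → ℝ}
    (hf : DifferentiableAt ℝ f x) (k : Fin n) :
    pd k (fun y => Real.sin (f y)) x = Real.cos (f x) * pd k f x := by
  unfold pd
  rw [(hf.hasFDerivAt.sin).fderiv]
  simp

lemma pd_cos {n : ℕ} {f : (Fin n → ℝ) → ℝ} {x : Fin n → ℝ}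
    (hf : DifferentiableAt ℝ f x) (k : Fin n) :
    pd k (fun y => Real.cos (f y)) x = -Real.sin (f x) * pd k f x := by
  unfold pd
  rw [(hf.hasFDerivAt.cos).fderiv]
  simp

-- second derivative via fderiv of fderiv
lemma pd_pd {n : ℕ} {f : (Fin n → ℝ) → ℝ} {x : Fin n → ℝ}
    (hf : DifferentiableAt ℝ (fderiv ℝ f) x) (i j : Fin n) :
    pd i (pd j f) x = fderiv ℝ (fderiv ℝ f) x (Pi.single i 1) (Pi.single j 1) := by
  unfold pd
  have h : HasFDerivAt (fun y => fderiv ℝ f y (Pi.single j 1))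
      ((ContinuousLinearMap.apply ℝ ℝ (Pi.single j 1)).comp (fderiv ℝ (fderiv ℝ f) x)) x :=
    by exact (ContinuousLinearMap.apply ℝ ℝ (Pi.single j 1)).hasFDerivAt.comp x hf.hasFDerivAt
  rw [h.fderiv]
  rfl

/-- Reduction of system (S2) to a triple of pairwise commuting Monge–Ampère equations for
the function `q`. -/
theorem S2_to_monge_ampere (U : Set (Fin 3 → ℝ)) (hU : IsOpen U)
    (p q r : (Fin 3 → ℝ) → ℝ)
    (hp : ContDiffOn ℝ (⊤ : ℕ∞) p U) (hq : ContDiffOn ℝ (⊤ : ℕ∞) q U) (hr : ContDiffOn ℝ (⊤ : ℕ∞) r U)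
    (hS2a : ∀ x ∈ U, pd 0 q x = Real.cos (p x))
    (hS2b : ∀ x ∈ U, pd 0 r x = -Real.sin (p x))
    (hS2c : ∀ x ∈ U, pd 1 p x = -Real.cosh (q x))
    (hS2d : ∀ x ∈ U, pd 1 r x = Real.sinh (q x))
    (hS2e : ∀ x ∈ U, pd 2 p x = Real.cos (r x))
    (hS2f : ∀ x ∈ U, pd 2 q x = Real.sin (r x))
    (hsinp : ∀ x ∈ U, 0 ≤ Real.sin (p x))
    (hcosr : ∀ x ∈ U, 0 ≤ Real.cos (r x)) :
    ∀ x ∈ U,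
      pd 0 (pd 1 q) x = Real.cosh (q x) * Real.sqrt (1 - (pd 0 q x) ^ 2) ∧
      pd 0 (pd 2 q) x = -(Real.sqrt (1 - (pd 0 q x) ^ 2) * Real.sqrt (1 - (pd 2 q x) ^ 2)) ∧
      pd 1 (pd 2 q) x = Real.sinh (q x) * Real.sqrt (1 - (pd 2 q x) ^ 2) := by
  intro x hx
  have hxU : U ∈ nhds x := hU.mem_nhds hx
  have hpx : DifferentiableAt ℝ p x :=
    ((hp.contDiffAt hxU).differentiableAt (by simp))
  have hrx : DifferentiableAt ℝ r x :=
    ((hr.contDiffAt hxU).differentiableAt (by simp))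
  have hqx2 : ContDiffAt ℝ 2 q x := (hq.contDiffAt hxU).of_le (WithTop.coe_le_coe.mpr (le_top : (2 : ℕ∞) ≤ ⊤))
  have hdfq : DifferentiableAt ℝ (fderiv ℝ q) x := by
    have := (hq.contDiffAt hxU).fderiv_right (m := 1) (WithTop.coe_le_coe.mpr le_top)
    exact this.differentiableAt one_ne_zero
  -- sqrt computations
  have e1 : Real.sqrt (1 - (pd 0 q x) ^ 2) = Real.sin (p x) := by
    rw [hS2a x hx]
    have : 1 - Real.cos (p x) ^ 2 = Real.sin (p x) ^ 2 := by
      have := Real.sin_sq_add_cos_sq (p x); linarith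
    rw [this, Real.sqrt_sq (hsinp x hx)]
  have e2 : Real.sqrt (1 - (pd 2 q x) ^ 2) = Real.cos (r x) := by
    rw [hS2f x hx]
    have : 1 - Real.sin (r x) ^ 2 = Real.cos (r x) ^ 2 := by
      have := Real.sin_sq_add_cos_sq (r x); linarith
    rw [this, Real.sqrt_sq (hcosr x hx)]
  -- pd 2 q agrees with sin ∘ r near x
  have hfq2 : pd 2 q =ᶠ[nhds x] fun y => Real.sin (r y) :=
    Filter.eventuallyEq_of_mem hxU hS2f
  have hfq0 : pd 0 q =ᶠ[nhds x] fun y => Real.cos (p y) :=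
    Filter.eventuallyEq_of_mem hxU hS2a
  refine ⟨?_, ?_, ?_⟩
  · -- pd 0 (pd 1 q) = pd 1 (pd 0 q) = pd 1 (cos ∘ p)
    have hsymm := hqx2.isSymmSndFDerivAt (by norm_num)
    have : pd 0 (pd 1 q) x = pd 1 (pd 0 q) x := by
      rw [pd_pd hdfq, pd_pd hdfq, hsymm]
    rw [this, pd_congr_nhds hfq0, pd_cos hpx, hS2c x hx, e1]
    ring
  · rw [pd_congr_nhds hfq2, pd_sin hrx, hS2b x hx, e1, e2]
    ring
  · rw [pd_congr_nhds hfq2, pd_sin hrx, hS2d x hx, e2]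
    ring
end

section
/- Invariance of the Peterson–Codazzi equations under the λ-deformation. Let U ⊆ ℝ² be open, let g_{11}, g_{22} : U → ℝ be smooth and positive, let η_1 be a smooth positive function depending only on the first coordinate and η_2 a smooth positive function depending only on the second coordinate, and set G_{11} = g_{11}/η_1, G_{22} = g_{22}/η_2. Let k¹, k² : U → ℝ be smooth with k¹ ≠ k² everywhere, satisfying the Peterson–Codazzi equations ∂_2 k¹/(k²−k¹) = ∂_2 ln√(G_{11}) and ∂_1 k²/(k¹−k²) = ∂_1 ln√(G_{22}) on U. Then for every λ ∈ ℝ with λ + η_1 > 0 and λ + η_2 > 0 on U, the same functions k¹, k² satisfy the Peterson–Codazzi equations with G_{11}, G_{22} replaced by G̃_{11} = g_{11}/(λ+η_1), G̃_{22} = g_{22}/(λ+η_2): ∂_2 k¹/(k²−k¹) = ∂_2 ln√(G̃_{11}) and ∂_1 k²/(k¹−k²) = ∂_1 ln√(G̃_{22}). -/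
open scoped BigOperators

lemma aux_single_ne {i j : Fin 2} (hij : j ≠ i) (c : ℝ → ℝ) (hc : ContDiff ℝ (⊤ : ℕ∞) c)
    (x : Fin 2 → ℝ) (hcx : c (x j) ≠ 0) :
    fderiv ℝ (fun y : Fin 2 → ℝ => Real.log (c (y j))) x (Pi.single i 1) = 0 := by
  have hL : HasFDerivAt (fun y : Fin 2 → ℝ => y j)
      (ContinuousLinearMap.proj j : (Fin 2 → ℝ) →L[ℝ] ℝ) x :=
    (ContinuousLinearMap.proj j : (Fin 2 → ℝ) →L[ℝ] ℝ).hasFDerivAt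
  have hcd : HasDerivAt c (deriv c (x j)) (x j) :=
    ((hc.differentiable (by simp)) (x j)).hasDerivAt
  have hlog : HasDerivAt (fun t => Real.log (c t))
      ((c (x j))⁻¹ * deriv c (x j)) (x j) :=
    (Real.hasDerivAt_log hcx).comp (x j) hcd
  have hF : HasFDerivAt (fun y : Fin 2 → ℝ => Real.log (c (y j)))
      (((c (x j))⁻¹ * deriv c (x j)) • (ContinuousLinearMap.proj j : (Fin 2 → ℝ) →L[ℝ] ℝ)) x :=
    by have := hlog.comp_hasFDerivAt x hL; exact this
  rw [hF.fderiv]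
  simp [Pi.single_eq_of_ne hij]

lemma aux_pd_log_sqrt {U : Set (Fin 2 → ℝ)} (hU : IsOpen U) {x : Fin 2 → ℝ} (hx : x ∈ U)
    {i j : Fin 2} (hij : j ≠ i)
    (g : (Fin 2 → ℝ) → ℝ) (c : ℝ → ℝ)
    (hg : ContDiffOn ℝ (⊤ : ℕ∞) g U) (hc : ContDiff ℝ (⊤ : ℕ∞) c)
    (hgpos : ∀ y ∈ U, 0 < g y) (hcpos : ∀ y ∈ U, 0 < c (y j)) :
    pd i (fun y => Real.log (Real.sqrt (g y / c (y j)))) x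
      = pd i (fun y => Real.log (g y) / 2) x := by
  have heq : (fun y => Real.log (Real.sqrt (g y / c (y j))))
      =ᶠ[nhds x] (fun y => Real.log (g y) / 2 - Real.log (c (y j)) / 2) := by
    filter_upwards [hU.mem_nhds hx] with y hy
    rw [Real.log_sqrt (div_nonneg (hgpos y hy).le (hcpos y hy).le),
      Real.log_div (hgpos y hy).ne' (hcpos y hy).ne']
    ring
  have hgd : DifferentiableAt ℝ g x :=
    (hg.contDiffAt (hU.mem_nhds hx)).differentiableAt (by simp)
  have hlogg : DifferentiableAt ℝ (fun y => Real.log (g y)) x :=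
    hgd.log (hgpos x hx).ne'
  have hA : DifferentiableAt ℝ (fun y => Real.log (g y) / 2) x := by
    simp only [div_eq_inv_mul]
    exact hlogg.const_mul _
  have hB : DifferentiableAt ℝ (fun y : Fin 2 → ℝ => Real.log (c (y j)) / 2) x := by
    have : DifferentiableAt ℝ (fun y : Fin 2 → ℝ => Real.log (c (y j))) x := by
      have hd : DifferentiableAt ℝ (fun t => Real.log (c t)) (x j) :=
        ((hc.differentiable (by simp)) (x j)).log (hcpos x hx).ne'
      exact hd.comp x ((ContinuousLinearMap.proj j : (Fin 2 → ℝ) →L[ℝ] ℝ).differentiableAt)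
    simp only [div_eq_inv_mul]
    exact this.const_mul _
  unfold pd
  rw [heq.fderiv_eq, fderiv_fun_sub hA hB]
  simp only [ContinuousLinearMap.sub_apply]
  have hBd : DifferentiableAt ℝ (fun y : Fin 2 → ℝ => Real.log (c (y j))) x := by
    have hd : DifferentiableAt ℝ (fun t => Real.log (c t)) (x j) :=
      ((hc.differentiable (by simp)) (x j)).log (hcpos x hx).ne'
    exact hd.comp x ((ContinuousLinearMap.proj j : (Fin 2 → ℝ) →L[ℝ] ℝ).differentiableAt)
  have h2 : (fun y : Fin 2 → ℝ => Real.log (c (y j)) / 2)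
      = fun y : Fin 2 → ℝ => (2:ℝ)⁻¹ * Real.log (c (y j)) := by
    funext y; ring
  have : fderiv ℝ (fun y : Fin 2 → ℝ => Real.log (c (y j)) / 2) x (Pi.single i 1) = 0 := by
    rw [h2, fderiv_const_mul hBd]
    simp [aux_single_ne hij c hc x (hcpos x hx).ne']
  rw [this, sub_zero]

/-- Invariance of the Peterson–Codazzi equations under the `λ`-deformation
`G_{ii} = g_{ii}/η_i ⟶ G̃_{ii} = g_{ii}/(λ+η_i)`. -/
theorem peterson_codazzi_invariance (U : Set (Fin 2 → ℝ)) (hU : IsOpen U)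
    (g₁₁ g₂₂ : (Fin 2 → ℝ) → ℝ)
    (hg₁₁ : ContDiffOn ℝ (⊤ : ℕ∞) g₁₁ U) (hg₂₂ : ContDiffOn ℝ (⊤ : ℕ∞) g₂₂ U)
    (hg₁₁pos : ∀ x ∈ U, 0 < g₁₁ x) (hg₂₂pos : ∀ x ∈ U, 0 < g₂₂ x)
    (η₁ η₂ : ℝ → ℝ) (hη₁ : ContDiff ℝ (⊤ : ℕ∞) η₁) (hη₂ : ContDiff ℝ (⊤ : ℕ∞) η₂)
    (hη₁pos : ∀ x ∈ U, 0 < η₁ (x 0)) (hη₂pos : ∀ x ∈ U, 0 < η₂ (x 1))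
    (k₁ k₂ : (Fin 2 → ℝ) → ℝ)
    (hk₁ : ContDiffOn ℝ (⊤ : ℕ∞) k₁ U) (hk₂ : ContDiffOn ℝ (⊤ : ℕ∞) k₂ U)
    (hkne : ∀ x ∈ U, k₁ x ≠ k₂ x)
    (hPC1 : ∀ x ∈ U,
      pd 1 k₁ x / (k₂ x - k₁ x) =
        pd 1 (fun y => Real.log (Real.sqrt (g₁₁ y / η₁ (y 0)))) x)
    (hPC2 : ∀ x ∈ U,
      pd 0 k₂ x / (k₁ x - k₂ x) =
        pd 0 (fun y => Real.log (Real.sqrt (g₂₂ y / η₂ (y 1)))) x) :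
    ∀ lam : ℝ, (∀ x ∈ U, 0 < lam + η₁ (x 0) ∧ 0 < lam + η₂ (x 1)) →
      (∀ x ∈ U,
        pd 1 k₁ x / (k₂ x - k₁ x) =
          pd 1 (fun y => Real.log (Real.sqrt (g₁₁ y / (lam + η₁ (y 0))))) x) ∧
      (∀ x ∈ U,
        pd 0 k₂ x / (k₁ x - k₂ x) =
          pd 0 (fun y => Real.log (Real.sqrt (g₂₂ y / (lam + η₂ (y 1))))) x) := by
  intro lam hlam
  constructor
  · intro x hx
    rw [aux_pd_log_sqrt hU hx (by decide : (0:Fin 2) ≠ 1) g₁₁ (fun t => lam + η₁ t)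
        hg₁₁ (contDiff_const.add hη₁) hg₁₁pos (fun y hy => (hlam y hy).1),
      ← aux_pd_log_sqrt hU hx (by decide : (0:Fin 2) ≠ 1) g₁₁ η₁ hg₁₁ hη₁ hg₁₁pos hη₁pos]
    exact hPC1 x hx
  · intro x hx
    rw [aux_pd_log_sqrt hU hx (by decide : (1:Fin 2) ≠ 0) g₂₂ (fun t => lam + η₂ t)
        hg₂₂ (contDiff_const.add hη₂) hg₂₂pos (fun y hy => (hlam y hy).2),
      ← aux_pd_log_sqrt hU hx (by decide : (1:Fin 2) ≠ 0) g₂₂ η₂ hg₂₂ hη₂ hg₂₂pos hη₂pos]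
    exact hPC2 x hx
end
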